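/- arXiv:1105.5612 — 6 statements merged into one kernel-verified Lean document; each statement's English description precedes it below -/
import Mathlib

section
/- If f : ℝⁿ → ℝ is a polynomial function that does not vanish identically, then its zero set {x ∈ ℝⁿ : f(x) = 0} has Hausdorff dimension at most n − 1. -/
/-!
Near a zero `a` of a `C¹` function `f : E → ℝ` with `L := f'(a) ≠ 0`, the map
`x ↦ x + (f x - L x) • v` (with `L v = 1`) has derivative the identity at `a` and sends
`{f = 0}` into the hyperplane `ker L`; its local inverse is Lipschitz, so the zero set has
dimension at most `dim E - 1` near every point where the derivative does not vanish. For a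
polynomial `p`, a zero where the gradient vanishes is a zero of every `∂ᵢp`, and some `∂ᵢp`
is not identically zero unless `p` is constant; induction on the total degree concludes.
-/

open scoped ENNReal

/-- A real-valued function on a real vector space is a *polynomial function* if it lies in the
`ℝ`-subalgebra of functions generated by the linear functionals. -/
def IsPolyFun {W : Type*} [AddCommGroup W] [Module ℝ W] (f : W → ℝ) : Prop :=
  f ∈ Algebra.adjoin ℝ {g : W → ℝ | IsLinearMap ℝ g}

open MvPolynomial Module Set Filter Topology

section RegularZeroSet

variable {E : Type*} [NormedAddCommGroup E] [NormedSpace ℝ E] [FiniteDimensional ℝ E]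

theorem dimH_ker_le {L : E →L[ℝ] ℝ} (hL : L ≠ 0) :
    dimH (LinearMap.ker (L : E →ₗ[ℝ] ℝ) : Set E) ≤ finrank ℝ E - 1 := by
  set K := LinearMap.ker (L : E →ₗ[ℝ] ℝ)
  rw [← Dual.finrank_ker_add_one_of_ne_zero (ContinuousLinearMap.coe_injective.ne hL),
    Nat.cast_add, Nat.cast_one, ENNReal.add_sub_cancel_right ENNReal.one_ne_top,
    ← Real.dimH_univ_eq_finrank, ← (isometry_subtype_coe (s := (K : Set E))).dimH_image,
    image_univ, Subtype.range_coe]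

theorem HasStrictFDerivAt.exists_mem_nhds_dimH_inter_setOf_eq_zero_le {f : E → ℝ}
    {L : E →L[ℝ] ℝ} {a : E} (hf : HasStrictFDerivAt f L a) (hL : L ≠ 0) :
    ∃ s ∈ 𝓝 a, dimH ({x | f x = 0} ∩ s) ≤ finrank ℝ E - 1 := by
  obtain ⟨v, hv⟩ : ∃ v, L v = 1 := by
    obtain ⟨u, hu⟩ := DFunLike.ne_iff.1 hL
    exact ⟨(L u)⁻¹ • u, by simpa using inv_mul_cancel₀ hu⟩
  set φ : E → E := fun x => x + (f x - L x) • v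
  have hφ : HasStrictFDerivAt φ (ContinuousLinearEquiv.refl ℝ E : E →L[ℝ] E) a := by
    convert (hasStrictFDerivAt_id a).add ((hf.sub L.hasStrictFDerivAt).smul_const v) using 1
    · rfl
    · ext; simp
  set g := hφ.localInverse φ _ a
  obtain ⟨C, t, ht, hg⟩ := hφ.to_localInverse.exists_lipschitzOnWith
  have hmaps : {x | f x = 0} ∩ (φ ⁻¹' t ∩ {x | g (φ x) = x}) ⊆
      g '' (LinearMap.ker (L : E →ₗ[ℝ] ℝ) ∩ t) := by
    rintro x ⟨hx, hxt, hgx⟩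
    exact ⟨φ x, ⟨by simp [φ, show f x = 0 from hx, hv], hxt⟩, hgx⟩
  refine ⟨_, inter_mem (hφ.continuousAt.preimage_mem_nhds ht) hφ.eventually_left_inverse, ?_⟩
  calc dimH ({x | f x = 0} ∩ (φ ⁻¹' t ∩ {x | g (φ x) = x}))
      ≤ dimH (LinearMap.ker (L : E →ₗ[ℝ] ℝ) ∩ t : Set E) :=
        (dimH_mono hmaps).trans (hg.mono inter_subset_right).dimH_image_le
    _ ≤ finrank ℝ E - 1 := (dimH_mono inter_subset_left).trans (dimH_ker_le hL)

theorem dimH_setOf_eq_zero_and_fderiv_ne_zero_le {f : E → ℝ} {f' : E → E →L[ℝ] ℝ}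
    (hf : ∀ x, HasStrictFDerivAt f (f' x) x) :
    dimH {x | f x = 0 ∧ f' x ≠ 0} ≤ finrank ℝ E - 1 := by
  by_contra! hlt
  obtain ⟨a, ⟨-, ha⟩, hlarge⟩ := exists_mem_nhdsWithin_lt_dimH_of_lt_dimH hlt
  obtain ⟨s, hs, hdim⟩ := (hf a).exists_mem_nhds_dimH_inter_setOf_eq_zero_le ha
  refine (hlarge _ (inter_mem_nhdsWithin _ hs)).not_ge (le_trans (dimH_mono ?_) hdim)
  exact inter_subset_inter_left _ fun x hx => hx.1

end RegularZeroSet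

namespace MvPolynomial

theorem totalDegree_pderiv_lt {R σ : Type*} [CommSemiring R] {p : MvPolynomial σ R} {i : σ}
    (h : pderiv i p ≠ 0) : (pderiv i p).totalDegree < p.totalDegree := by
  obtain ⟨m, hm, hdeg⟩ := (pderiv i p).support.exists_mem_eq_sup (support_nonempty.2 h)
    fun s => s.sum fun _ e => e
  have hm' : m + Finsupp.single i 1 ∈ p.support := by
    rw [mem_support_iff, coeff_pderiv] at hm
    exact mem_support_iff.2 (left_ne_zero_of_mul hm)
  calc (pderiv i p).totalDegree = m.sum fun _ e => e := hdeg
    _ < (m + Finsupp.single i 1).sum fun _ e => e := by simp [Finsupp.sum_add_index']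
    _ ≤ p.totalDegree := le_totalDegree hm'

variable {ι : Type*} [Fintype ι]

theorem hasStrictFDerivAt_eval_comp {E : Type*} [NormedAddCommGroup E] [NormedSpace ℝ E]
    (ℓ : ι → E →L[ℝ] ℝ) (p : MvPolynomial ι ℝ) (x : E) :
    HasStrictFDerivAt (fun y => eval (fun i => ℓ i y) p)
      (∑ i, eval (fun j => ℓ j x) (pderiv i p) • ℓ i) x := by
  classical
  induction p using MvPolynomial.induction_on with
  | C a => simpa using hasStrictFDerivAt_const a x
  | add p q hp hq =>
    simp only [map_add, add_smul, Finset.sum_add_distrib]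
    exact hp.add hq
  | mul_X p j hp =>
    simp only [map_mul, eval_X]
    refine (hp.mul (ℓ j).hasStrictFDerivAt).congr_fderiv ?_
    simp [pderiv_X, Pi.single_apply, add_smul, Finset.sum_add_distrib, Finset.smul_sum,
      smul_smul, apply_ite (eval _), ite_smul]

theorem dimH_setOf_eval_eq_zero_le (p : MvPolynomial ι ℝ)
    (hp : ∃ x : EuclideanSpace ℝ ι, eval (fun i => x i) p ≠ 0) :
    dimH {x : EuclideanSpace ℝ ι | eval (fun i => x i) p = 0} ≤ Fintype.card ι - 1 := by
  classical
  induction hd : p.totalDegree using Nat.strong_induction_on generalizing p with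
  | _ d ih =>
  subst hd
  set f' : EuclideanSpace ℝ ι → EuclideanSpace ℝ ι →L[ℝ] ℝ :=
    fun x => ∑ j, eval (fun k => x k) (pderiv j p) • EuclideanSpace.proj (𝕜 := ℝ) j
  have hderiv (x : EuclideanSpace ℝ ι) :
      HasStrictFDerivAt (fun y : EuclideanSpace ℝ ι => eval (fun i => y i) p) (f' x) x :=
    hasStrictFDerivAt_eval_comp (EuclideanSpace.proj (𝕜 := ℝ) (ι := ι)) p x
  by_cases hpartial : ∃ i, ∃ x : EuclideanSpace ℝ ι, eval (fun j => x j) (pderiv i p) ≠ 0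
  · obtain ⟨i, hi⟩ := hpartial
    have hsub : {x : EuclideanSpace ℝ ι | eval (fun i => x i) p = 0} ⊆
        {x | eval (fun i => x i) p = 0 ∧ f' x ≠ 0} ∪
          {x | eval (fun j => x j) (pderiv i p) = 0} := by
      intro x hx
      by_cases hcrit : f' x = 0
      · right
        simpa [f'] using congr($hcrit (EuclideanSpace.single i 1))
      · exact Or.inl ⟨hx, hcrit⟩
    have hi' : pderiv i p ≠ 0 := fun h => by simp [h] at hi
    refine (dimH_mono hsub).trans ?_
    rw [dimH_union]
    refine max_le ?_ (ih _ (totalDegree_pderiv_lt hi') _ hi rfl)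
    simpa using dimH_setOf_eq_zero_and_fderiv_ne_zero_le hderiv
  · push Not at hpartial
    obtain ⟨y, hy⟩ := hp
    have hconst : ∀ x : EuclideanSpace ℝ ι, eval (fun i => x i) p = eval (fun i => y i) p :=
      fun x => is_const_of_fderiv_eq_zero (fun z => (hderiv z).differentiableAt)
        (fun z => by simp [(hderiv z).hasFDerivAt.fderiv, f', hpartial]) x y
    simp [hconst, hy]

end MvPolynomial

theorem IsPolyFun.exists_eq_eval {ι : Type*} [Fintype ι] {f : EuclideanSpace ℝ ι → ℝ}
    (hf : IsPolyFun f) : ∃ p : MvPolynomial ι ℝ, f = fun x => eval (fun i => x i) p := by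
  induction hf using Algebra.adjoin_induction with
  | mem g hg =>
    let b := EuclideanSpace.basisFun ι ℝ
    refine ⟨∑ i, C (g (b i)) * X i, funext fun x => ?_⟩
    simpa [mul_comm, b] using (congrArg (IsLinearMap.mk' g hg) (b.sum_repr x)).symm
  | algebraMap r => exact ⟨C r, by ext; simp⟩
  | add _ _ _ _ hf hg =>
    obtain ⟨p, rfl⟩ := hf
    obtain ⟨q, rfl⟩ := hg
    exact ⟨p + q, by ext; simp⟩
  | mul _ _ _ _ hf hg =>
    obtain ⟨p, rfl⟩ := hf
    obtain ⟨q, rfl⟩ := hg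
    exact ⟨p * q, by ext; simp⟩

/-- The zero set of a polynomial function `ℝⁿ → ℝ` that does not vanish identically has
Hausdorff dimension at most `n - 1` (with respect to the Euclidean metric). -/
theorem dimH_zeroSet_le {n : ℕ} (f : EuclideanSpace ℝ (Fin n) → ℝ)
    (hf : IsPolyFun f) (hne : ∃ x, f x ≠ 0) :
    dimH {x : EuclideanSpace ℝ (Fin n) | f x = 0} ≤ (n : ℝ≥0∞) - 1 := by
  obtain ⟨p, rfl⟩ := hf.exists_eq_eval
  simpa using dimH_setOf_eval_eq_zero_le p hne
end

section
/- (Mautner phenomenon.) Suppose π : G → O(ℌ) is a strongly continuous orthogonal representation of a connected Lie group G on a separable real Hilbert space ℌ, that H ≤ G is a connected Lie subgroup, that g ∈ G, and that there are sequences g_i ∈ G and h_i, h_i' ∈ H with g_i → e and g_i h_i g_i⁻¹ h_i' → g. Then every vector of ℌ fixed by π(h) for all h ∈ H is also fixed by π(g); that is, Fix(π(g)) ⊇ Fix(π(H)). -/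
/-!
Conjugating by `gᵢ → e` moves an `H`-fixed vector `v` only slightly: if `h` fixes `v` and `π` acts
by isometries, then `‖π(gᵢ hᵢ gᵢ⁻¹) v - v‖ ≤ 2 ‖π(gᵢ) v - v‖ → 0`. Since `hᵢ'` also fixes `v`,
the vectors `π(gᵢ hᵢ gᵢ⁻¹ hᵢ') v` tend both to `v` and, by strong continuity, to `π(g) v`.
-/

open Filter Topology

section IsometricAction

variable {G X : Type*} [Group G] [MulAction G X]

theorem dist_conj_smul_le_of_smul_eq [PseudoMetricSpace X] [IsIsometricSMul G X]
    {h : G} {x : X} (hx : h • x = x) (g : G) :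
    dist ((g * h * g⁻¹) • x) x ≤ 2 * dist (g • x) x :=
  calc dist ((g * h * g⁻¹) • x) x
      ≤ dist ((g * h * g⁻¹) • x) ((g * h) • x) + dist ((g * h) • x) x := dist_triangle _ _ _
    _ = dist (g⁻¹ • x) x + dist (g • x) x := by
      rw [mul_smul, dist_smul, mul_smul, hx]
    _ = 2 * dist (g • x) x := by
      rw [← dist_smul g, smul_inv_smul, dist_comm]; ring

variable [TopologicalSpace G] {ι : Type*} {l : Filter ι} {gs hs : ι → G}

theorem tendsto_conj_smul_of_smul_eq [PseudoMetricSpace X] [IsIsometricSMul G X] {x : X}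
    (hcont : Continuous fun g : G => g • x) (hgs : Tendsto gs l (𝓝 1))
    (hhs : ∀ i, hs i • x = x) :
    Tendsto (fun i => (gs i * hs i * (gs i)⁻¹) • x) l (𝓝 x) := by
  have horbit : Tendsto (fun i => dist (gs i • x) x) l (𝓝 0) := by
    simpa using (tendsto_iff_dist_tendsto_zero.mp ((hcont.tendsto 1).comp hgs))
  refine tendsto_iff_dist_tendsto_zero.mpr (squeeze_zero (fun _ => dist_nonneg)
    (fun i => dist_conj_smul_le_of_smul_eq (hhs i) (gs i)) ?_)
  simpa using horbit.const_mul 2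

theorem smul_eq_self_of_tendsto_conj_mul [MetricSpace X] [IsIsometricSMul G X] [l.NeBot]
    {x : X} (hcont : Continuous fun g : G => g • x) {g : G} {hs' : ι → G}
    (hgs : Tendsto gs l (𝓝 1)) (hhs : ∀ i, hs i • x = x) (hhs' : ∀ i, hs' i • x = x)
    (hconv : Tendsto (fun i => gs i * hs i * (gs i)⁻¹ * hs' i) l (𝓝 g)) :
    g • x = x := by
  have hlim : Tendsto (fun i => (gs i * hs i * (gs i)⁻¹ * hs' i) • x) l (𝓝 (g • x)) :=
    (hcont.tendsto g).comp hconv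
  simp only [mul_smul _ (hs' _), hhs'] at hlim
  exact tendsto_nhds_unique hlim (tendsto_conj_smul_of_smul_eq hcont hgs hhs)

end IsometricAction

theorem mautner_phenomenon_general
    {G : Type*} [Group G] [TopologicalSpace G]
    {ℌ : Type*} [NormedAddCommGroup ℌ] [InnerProductSpace ℝ ℌ]
    (π : G →* (ℌ ≃ₗᵢ[ℝ] ℌ)) (hπcont : ∀ v : ℌ, Continuous fun g : G => π g v)
    (H : Subgroup G)
    (g : G) (gs hs hs' : ℕ → G)
    (hhsmem : ∀ i, hs i ∈ H) (hhs'mem : ∀ i, hs' i ∈ H)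
    (hgs : Tendsto gs atTop (nhds (1 : G)))
    (hconv : Tendsto (fun i => gs i * hs i * (gs i)⁻¹ * hs' i) atTop (nhds g))
    (v : ℌ) (hv : ∀ h ∈ H, π h v = v) :
    π g v = v := by
  let : MulAction G ℌ :=
    { smul g v := π g v
      one_smul v := show π 1 v = v by simp
      mul_smul g₁ g₂ v := show π (g₁ * g₂) v = π g₁ (π g₂ v) by simp }
  have : IsIsometricSMul G ℌ := ⟨fun g => (π g).isometry⟩
  exact smul_eq_self_of_tendsto_conj_mul (hπcont v) hgs (fun i => hv _ (hhsmem i))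
    (fun i => hv _ (hhs'mem i)) hconv

/-- **The Mautner phenomenon.**
Let `π` be a strongly continuous orthogonal representation of a connected Lie group `G` on a
separable real Hilbert space `ℌ`, let `H ≤ G` be a connected Lie subgroup, and suppose `g ∈ G`
is such that there are sequences `gᵢ ∈ G` and `hᵢ, hᵢ' ∈ H` with `gᵢ → e` and
`gᵢ hᵢ gᵢ⁻¹ hᵢ' → g`.  Then every vector fixed by `π(h)` for all `h ∈ H` is fixed by `π(g)`. -/
theorem mautner_phenomenon
    {E𝔪 H𝔪 : Type*} [NormedAddCommGroup E𝔪] [NormedSpace ℝ E𝔪] [TopologicalSpace H𝔪]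
    {I : ModelWithCorners ℝ E𝔪 H𝔪}
    {G : Type*} [Group G] [TopologicalSpace G] [IsTopologicalGroup G] [ChartedSpace H𝔪 G]
    [LieGroup I (⊤ : ℕ∞) G] [ConnectedSpace G]
    {ℌ : Type*} [NormedAddCommGroup ℌ] [InnerProductSpace ℝ ℌ] [CompleteSpace ℌ]
    [TopologicalSpace.SeparableSpace ℌ]
    (π : G →* (ℌ ≃ₗᵢ[ℝ] ℌ)) (hπcont : ∀ v : ℌ, Continuous fun g : G => π g v)
    (H : Subgroup G) (hHconn : IsConnected (H : Set G))
    (g : G) (gs hs hs' : ℕ → G)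
    (hhsmem : ∀ i, hs i ∈ H) (hhs'mem : ∀ i, hs' i ∈ H)
    (hgs : Tendsto gs atTop (nhds (1 : G)))
    (hconv : Tendsto (fun i => gs i * hs i * (gs i)⁻¹ * hs' i) atTop (nhds g))
    (v : ℌ) (hv : ∀ h ∈ H, π h v = v) :
    π g v = v :=
  mautner_phenomenon_general π hπcont H g gs hs hs' hhsmem hhs'mem hgs hconv v hv
end

section
/- If 𝖢 is an idempotent class of G-systems and X = (X, Σ, μ, u) is any G-system, then X has an essentially unique largest factor Λ ≤ Σ that may be generated by a factor map to a member of 𝖢: that is, there is a globally u-invariant σ-subalgebra Λ of Σ which is generated modulo μ-negligible sets by a factor map from X to some member of 𝖢, and which contains, up to μ-negligible sets, every σ-subalgebra of Σ generated by a factor map from X to a member of 𝖢. -/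
open MeasureTheory

variable (G : Type*) [Group G] [TopologicalSpace G] [MeasurableSpace G]

/-- A jointly measurable, probability-preserving `G`-system on a standard Borel space. -/
structure GSystem where
  (carrier : Type)
  [ms : MeasurableSpace carrier]
  [sb : StandardBorelSpace carrier]
  (μ : Measure carrier)
  (prob : IsProbabilityMeasure μ)
  (act : G → carrier → carrier)
  (act_one : ∀ x, act 1 x = x)
  (act_mul : ∀ g g' x, act (g * g') x = act g (act g' x))
  (jointly_meas : Measurable fun p : G × carrier => act p.1 p.2)
  (preserves : ∀ g, MeasurePreserving (act g) μ μ)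

attribute [instance] GSystem.ms GSystem.sb

variable {G}

/-- `f` is a factor map from the system `Y` onto the system `X`. -/
def IsFactorMap (Y X : GSystem G) (f : Y.carrier → X.carrier) : Prop :=
  Measurable f ∧ Measure.map f Y.μ = X.μ ∧
    ∀ g : G, ∀ᵐ y ∂Y.μ, f (Y.act g y) = X.act g (f y)

/-- `X` is a factor of `Y`. -/
def IsFactorOf (X Y : GSystem G) : Prop := ∃ f, IsFactorMap Y X f

/-- Measure-theoretic isomorphism of `G`-systems. -/
def Isomorphic (X Y : GSystem G) : Prop :=
  ∃ (f : X.carrier → Y.carrier) (g : Y.carrier → X.carrier),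
    IsFactorMap X Y f ∧ IsFactorMap Y X g ∧
    (∀ᵐ x ∂X.μ, g (f x) = x) ∧ (∀ᵐ y ∂Y.μ, f (g y) = y)

/-- A joining of a countable family of `G`-systems: a probability measure on the product with
the prescribed marginals, invariant under the diagonal action. -/
def IsJoining {ι : Type} (Xs : ι → GSystem G) (lam : Measure (∀ i, (Xs i).carrier)) : Prop :=
  IsProbabilityMeasure lam ∧
  (∀ i, Measure.map (fun x => x i) lam = (Xs i).μ) ∧
  (∀ g : G, Measure.map (fun x i => (Xs i).act g (x i)) lam = lam)

/-- The `G`-system obtained from a joining of a countable family of `G`-systems. -/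
noncomputable def joinSystem {ι : Type} [Countable ι] (Xs : ι → GSystem G)
    (lam : Measure (∀ i, (Xs i).carrier)) (hlam : IsJoining Xs lam) : GSystem G where
  carrier := ∀ i, (Xs i).carrier
  μ := lam
  prob := hlam.1
  act g x := fun i => (Xs i).act g (x i)
  act_one x := funext fun i => (Xs i).act_one (x i)
  act_mul g g' x := funext fun i => (Xs i).act_mul g g' (x i)
  jointly_meas := measurable_pi_iff.2 fun i =>
    (Xs i).jointly_meas.comp (measurable_fst.prodMk ((measurable_pi_apply i).comp measurable_snd))
  preserves g :=
    ⟨measurable_pi_iff.2 fun i =>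
        (Xs i).jointly_meas.comp (measurable_const.prodMk (measurable_pi_apply i)),
      hlam.2.2 g⟩

/-- `Z` is an inverse limit of the tower of systems `Xs 0 ← Xs 1 ← ⋯`. -/
def IsInverseLimit (Z : GSystem G) (Xs : ℕ → GSystem G) : Prop :=
  ∃ π : ∀ n, Z.carrier → (Xs n).carrier,
    (∀ n, IsFactorMap Z (Xs n) (π n)) ∧
    (∀ n, ∃ f, IsFactorMap (Xs (n + 1)) (Xs n) f ∧ ∀ᵐ z ∂Z.μ, π n z = f (π (n + 1) z)) ∧
    (∀ A : Set Z.carrier, MeasurableSet A →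
      ∃ B : Set Z.carrier,
        MeasurableSet[⨆ n, MeasurableSpace.comap (π n) (Xs n).ms] B ∧
        Z.μ (symmDiff A B) = 0)

/-- An *idempotent class* of `G`-systems: a class closed under measure-theoretic isomorphism,
inverse limits and arbitrary (countable) joinings. -/
structure IsIdempotentClass (C : Set (GSystem G)) : Prop where
  (iso_closed : ∀ X ∈ C, ∀ Y : GSystem G, Isomorphic X Y → Y ∈ C)
  (joining_closed : ∀ (ι : Type) [Countable ι], ∀ (Xs : ι → GSystem G)
    (lam : Measure (∀ i, (Xs i).carrier)) (hlam : IsJoining Xs lam),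
    (∀ i, Xs i ∈ C) → joinSystem Xs lam hlam ∈ C)
  (invLim_closed : ∀ (Xs : ℕ → GSystem G) (Z : GSystem G),
    (∀ n, Xs n ∈ C) → IsInverseLimit Z Xs → Z ∈ C)

/-- A class of systems is *hereditary* if it is closed under passing to factors. -/
def IsHereditary (C : Set (GSystem G)) : Prop :=
  ∀ X ∈ C, ∀ Y : GSystem G, IsFactorOf Y X → Y ∈ C

/-!
The measure algebra of `X` is separable, so countably many factor maps into `𝖢` already
approximate every set measurable with respect to some `𝖢`-factor: for each set `t` of a
countable measure-dense family and each `n`, keep one `𝖢`-factor set that is `1/n`-close to `t`,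
whenever there is one. The product of these countably many factor maps is a factor map onto a
joining of members of `𝖢`, hence onto a member of `𝖢`, and its factor is the maximal one: a
`𝖢`-factor set is a limit of sets in it, and Borel–Cantelli turns approximation into equality
modulo null sets. Finally, taking all sets that agree a.e. with a set of this factor makes it
strictly invariant, since the product map is only a.e. equivariant.
-/

open Filter
open scoped ENNReal symmDiff

section MeasureTheory

variable {α : Type*} {m : MeasurableSpace α} [m0 : MeasurableSpace α] {μ : Measure α}

theorem exists_ae_eq_of_forall_measure_symmDiff_lt {A : Set α}
    (h : ∀ ε : ℝ≥0∞, 0 < ε → ∃ B, MeasurableSet[m] B ∧ μ (A ∆ B) < ε) :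
    ∃ B, MeasurableSet[m] B ∧ A =ᵐ[μ] B := by
  choose B hB hAB using fun k : ℕ => h (2⁻¹ ^ k) (ENNReal.pow_pos (by norm_num) k)
  have hsum : ∑' k, μ (A ∆ B k) ≠ ∞ :=
    ne_top_of_le_ne_top (by simp [ENNReal.tsum_geometric])
      (ENNReal.tsum_le_tsum fun k => (hAB k).le)
  refine ⟨limsup B atTop, @MeasurableSet.measurableSet_limsup _ m _ hB, ?_⟩
  filter_upwards [ae_eventually_notMem hsum] with x hx
  have hB_iff : ∀ᶠ k in atTop, x ∈ B k ↔ x ∈ A := hx.mono fun k hk => by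
    simp only [Set.mem_symmDiff] at hk
    tauto
  change (x ∈ A) = (x ∈ limsup B atTop)
  rw [eq_iff_iff, mem_limsup_iff_frequently_mem, frequently_congr hB_iff, frequently_const]

theorem MeasureTheory.Measure.MeasureDense.exists_measure_symmDiff_lt [IsFiniteMeasure μ]
    {𝒜 : Set (Set α)} (h𝒜 : μ.MeasureDense 𝒜) {s : Set α} (hs : MeasurableSet s)
    {ε : ℝ≥0∞} (hε : 0 < ε) : ∃ t ∈ 𝒜, μ (s ∆ t) < ε := by
  obtain ⟨r, -, hr, hrε⟩ := ENNReal.lt_iff_exists_real_btwn.1 hε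
  obtain ⟨t, ht, hst⟩ := h𝒜.approx s hs (measure_ne_top μ s) r (ENNReal.ofReal_pos.1 hr)
  exact ⟨t, ht, hst.trans hrε⟩

variable (m μ) in
abbrev aeClosure : MeasurableSpace α where
  MeasurableSet' A := MeasurableSet[m0] A ∧ ∃ B, MeasurableSet[m] B ∧ A =ᵐ[μ] B
  measurableSet_empty := ⟨.empty, ∅, @MeasurableSet.empty _ m, .rfl⟩
  measurableSet_compl _ := fun ⟨hA, B, hB, hAB⟩ => ⟨hA.compl, Bᶜ, hB.compl, hAB.compl⟩
  measurableSet_iUnion A h := by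
    choose hA B hB hAB using h
    exact ⟨.iUnion hA, ⋃ n, B n, .iUnion hB, Filter.EventuallyEq.countable_iUnion hAB⟩

theorem aeClosure_le : aeClosure m μ ≤ m0 :=
  fun _ hA => hA.1

theorem le_aeClosure (hm : m ≤ m0) : m ≤ aeClosure m μ :=
  fun A hA => ⟨hm A hA, A, hA, .rfl⟩

end MeasureTheory

section GSystems

variable {G : Type*} [Group G] [MeasurableSpace G]

theorem IsFactorMap.measurableSet_aeClosure_act_preimage {X Y : GSystem G}
    {F : X.carrier → Y.carrier} (hF : IsFactorMap X Y F) (g : G) {A : Set X.carrier}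
    (hA : MeasurableSet[aeClosure (MeasurableSpace.comap F Y.ms) X.μ] A) :
    MeasurableSet[aeClosure (MeasurableSpace.comap F Y.ms) X.μ] (X.act g ⁻¹' A) := by
  obtain ⟨hA, _, ⟨B, hB, rfl⟩, hAB⟩ := hA
  refine ⟨(X.preserves g).measurable hA, F ⁻¹' (Y.act g ⁻¹' B),
    ⟨_, (Y.preserves g).measurable hB, rfl⟩, ?_⟩
  have hequiv : F ∘ X.act g =ᵐ[X.μ] Y.act g ∘ F := hF.2.2 g
  exact ((X.preserves g).quasiMeasurePreserving.preimage_ae_eq hAB).trans (hequiv.preimage B)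

section Joinings

variable {ι : Type} {X : GSystem G} {Xs : ι → GSystem G}
  {f : ∀ i, X.carrier → (Xs i).carrier}

theorem comap_le_comap_pi (i : ι) :
    MeasurableSpace.comap (f i) (Xs i).ms ≤
      MeasurableSpace.comap (fun x i => f i x) MeasurableSpace.pi := by
  rw [show f i = (fun y : ∀ i, (Xs i).carrier => y i) ∘ fun x i => f i x from rfl,
    ← MeasurableSpace.comap_comp]
  exact MeasurableSpace.comap_mono (measurable_pi_apply i).comap_le

variable [Countable ι]

theorem ae_pi_comp_act_eq (hf : ∀ i, IsFactorMap X (Xs i) (f i)) (g : G) :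
    (fun x i => f i x) ∘ X.act g =ᵐ[X.μ] (fun y i => (Xs i).act g (y i)) ∘ fun x i => f i x :=
  (ae_all_iff.2 fun i => (hf i).2.2 g).mono fun _ hx => funext hx

theorem isJoining_map_pi (hf : ∀ i, IsFactorMap X (Xs i) (f i)) :
    IsJoining Xs (X.μ.map fun x i => f i x) := by
  have := X.prob
  have hF : Measurable fun x i => f i x := measurable_pi_iff.2 fun i => (hf i).1
  refine ⟨Measure.isProbabilityMeasure_map hF.aemeasurable, fun i => ?_, fun g => ?_⟩
  · rw [Measure.map_map (measurable_pi_apply i) hF]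
    exact (hf i).2.1
  · have hact : Measurable fun (y : ∀ i, (Xs i).carrier) i => (Xs i).act g (y i) :=
      measurable_pi_iff.2 fun i =>
        (Xs i).jointly_meas.comp (measurable_const.prodMk (measurable_pi_apply i))
    rw [Measure.map_map hact hF, ← Measure.map_congr (ae_pi_comp_act_eq hf g),
      ← Measure.map_map hF (X.preserves g).measurable, (X.preserves g).map_eq]

theorem isFactorMap_pi (hf : ∀ i, IsFactorMap X (Xs i) (f i)) :
    IsFactorMap X (joinSystem Xs _ (isJoining_map_pi hf)) fun x i => f i x :=
  ⟨measurable_pi_iff.2 fun i => (hf i).1, rfl, ae_pi_comp_act_eq hf⟩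

end Joinings

def IsJoiningClosed (C : Set (GSystem G)) : Prop :=
  ∀ (ι : Type) [Countable ι] (Xs : ι → GSystem G) (lam : Measure (∀ i, (Xs i).carrier))
    (hlam : IsJoining Xs lam), (∀ i, Xs i ∈ C) → joinSystem Xs lam hlam ∈ C

def IsClassFactorSet (C : Set (GSystem G)) (X : GSystem G) (A : Set X.carrier) : Prop :=
  ∃ Y ∈ C, ∃ f : X.carrier → Y.carrier, IsFactorMap X Y f ∧
    MeasurableSet[MeasurableSpace.comap f Y.ms] A

theorem IsClassFactorSet.measurableSet {C : Set (GSystem G)} {X : GSystem G} {A : Set X.carrier}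
    (hA : IsClassFactorSet C X A) : MeasurableSet A := by
  obtain ⟨_, -, _, hf, hA⟩ := hA
  exact hf.1.comap_le A hA

theorem exists_factorMap_approximating_classFactorSets {C : Set (GSystem G)}
    (hC : IsJoiningClosed C) (X : GSystem G) :
    ∃ Y ∈ C, ∃ F : X.carrier → Y.carrier, IsFactorMap X Y F ∧
      ∀ A, IsClassFactorSet C X A → ∀ ε : ℝ≥0∞, 0 < ε →
        ∃ B, MeasurableSet[MeasurableSpace.comap F Y.ms] B ∧ X.μ (A ∆ B) < ε := by
  have := X.prob
  obtain ⟨𝒜, h𝒜, hdense⟩ := exists_countable_measureDense X.μ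
  let S : Set (Set X.carrier × ℕ) := {p | p.1 ∈ 𝒜 ∧
    ∃ B, IsClassFactorSet C X B ∧ X.μ (p.1 ∆ B) < (p.2 : ℝ≥0∞)⁻¹}
  have hS : S ⊆ 𝒜 ×ˢ Set.univ := fun _ hp => ⟨hp.1, Set.mem_univ _⟩
  have : Countable S := ((h𝒜.prod Set.countable_univ).mono hS).to_subtype
  choose B hB hBclose using fun p : S => p.2.2
  choose Ys hYs f hf hBf using hB
  refine ⟨_, hC S Ys _ (isJoining_map_pi hf) hYs, _, isFactorMap_pi hf, ?_⟩
  intro A hA ε hε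
  obtain ⟨n, hn⟩ := ENNReal.exists_inv_nat_lt (ENNReal.half_pos hε.ne').ne'
  obtain ⟨t, ht, hAt⟩ := hdense.exists_measure_symmDiff_lt hA.measurableSet
    (ENNReal.inv_pos.2 (ENNReal.natCast_ne_top n))
  have hp : (t, n) ∈ S := ⟨ht, A, hA, by rwa [symmDiff_comm]⟩
  let p : S := ⟨_, hp⟩
  refine ⟨B p, comap_le_comap_pi p _ (hBf p), ?_⟩
  calc X.μ (A ∆ B p) ≤ X.μ (A ∆ t) + X.μ (t ∆ B p) := measure_symmDiff_le _ _ _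
    _ < (n : ℝ≥0∞)⁻¹ + (n : ℝ≥0∞)⁻¹ := ENNReal.add_lt_add hAt (hBclose p)
    _ ≤ ε / 2 + ε / 2 := add_le_add hn.le hn.le
    _ = ε := ENNReal.add_halves ε

end GSystems

theorem exists_maximal_idempotentClass_factor_general
    {G : Type*} [Group G] [MeasurableSpace G]
    (C : Set (GSystem G)) (hC : IsIdempotentClass C) (X : GSystem G) :
    ∃ Λ : MeasurableSpace X.carrier,
      Λ ≤ X.ms ∧
      (∀ g : G, ∀ A : Set X.carrier, MeasurableSet[Λ] A → MeasurableSet[Λ] (X.act g ⁻¹' A)) ∧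
      (∃ Y ∈ C, ∃ f : X.carrier → Y.carrier, IsFactorMap X Y f ∧
        (∀ A : Set X.carrier, MeasurableSet[Λ] A →
          ∃ B, MeasurableSet[MeasurableSpace.comap f Y.ms] B ∧ X.μ (symmDiff A B) = 0) ∧
        (∀ B : Set X.carrier, MeasurableSet[MeasurableSpace.comap f Y.ms] B →
          ∃ A, MeasurableSet[Λ] A ∧ X.μ (symmDiff A B) = 0)) ∧
      (∀ Y' ∈ C, ∀ f' : X.carrier → Y'.carrier, IsFactorMap X Y' f' →
        ∀ A : Set X.carrier, MeasurableSet[MeasurableSpace.comap f' Y'.ms] A →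
          ∃ B, MeasurableSet[Λ] B ∧ X.μ (symmDiff A B) = 0) := by
  obtain ⟨Y, hYC, F, hF, happrox⟩ :=
    exists_factorMap_approximating_classFactorSets hC.joining_closed X
  refine ⟨aeClosure (MeasurableSpace.comap F Y.ms) X.μ, aeClosure_le,
    fun g _ => hF.measurableSet_aeClosure_act_preimage g,
    ⟨Y, hYC, F, hF, fun A hA => ?_, fun B hB => ?_⟩, fun Y' hY' f' hf' A hA => ?_⟩
  · obtain ⟨-, B, hB, hAB⟩ := hA
    exact ⟨B, hB, measure_symmDiff_eq_zero_iff.2 hAB⟩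
  · exact ⟨B, le_aeClosure hF.1.comap_le B hB, by simp⟩
  · have hA' : IsClassFactorSet C X A := ⟨Y', hY', f', hf', hA⟩
    obtain ⟨B, hB, hAB⟩ := exists_ae_eq_of_forall_measure_symmDiff_lt (happrox A hA')
    exact ⟨A, ⟨hA'.measurableSet, B, hB, hAB⟩, by simp⟩

/-- **Existence of maximal 𝖢-factors.**
If `𝖢` is an idempotent class of `G`-systems and `X` is any `G`-system, then `X` has a largest
factor generated by a factor map to a member of `𝖢`: a globally invariant σ-subalgebra `Λ ≤ Σ`
which is generated up to `μ`-negligible sets by a factor map to a member of `𝖢`, and which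
contains, up to `μ`-negligible sets, every σ-subalgebra generated by a factor map from `X` to a
member of `𝖢`. -/
theorem exists_maximal_idempotentClass_factor
    {G : Type*} [Group G] [TopologicalSpace G] [IsTopologicalGroup G] [MeasurableSpace G]
    [BorelSpace G] [LocallyCompactSpace G] [SecondCountableTopology G]
    (C : Set (GSystem G)) (hC : IsIdempotentClass C) (X : GSystem G) :
    ∃ Λ : MeasurableSpace X.carrier,
      Λ ≤ X.ms ∧
      (∀ g : G, ∀ A : Set X.carrier, MeasurableSet[Λ] A → MeasurableSet[Λ] (X.act g ⁻¹' A)) ∧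
      (∃ Y ∈ C, ∃ f : X.carrier → Y.carrier, IsFactorMap X Y f ∧
        (∀ A : Set X.carrier, MeasurableSet[Λ] A →
          ∃ B, MeasurableSet[MeasurableSpace.comap f Y.ms] B ∧ X.μ (symmDiff A B) = 0) ∧
        (∀ B : Set X.carrier, MeasurableSet[MeasurableSpace.comap f Y.ms] B →
          ∃ A, MeasurableSet[Λ] A ∧ X.μ (symmDiff A B) = 0)) ∧
      (∀ Y' ∈ C, ∀ f' : X.carrier → Y'.carrier, IsFactorMap X Y' f' →
        ∀ A : Set X.carrier, MeasurableSet[MeasurableSpace.comap f' Y'.ms] A →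
          ∃ B, MeasurableSet[Λ] B ∧ X.μ (symmDiff A B) = 0) :=
  exists_maximal_idempotentClass_factor_general C hC X
end

section
/- Suppose q : H → G is a continuous homomorphism of locally compact second countable groups and 𝖢 is an idempotent class of H-systems. Then the image class q_*𝖢 := {G-systems X such that X^{q(·)} ∈ 𝖢} is an idempotent class of G-systems, and it is hereditary if 𝖢 is hereditary. -/
open MeasureTheory

variable (G : Type*) [Group G] [TopologicalSpace G] [MeasurableSpace G]

variable {G}

/-- The `H`-system `X^{q(·)}` obtained from a `G`-system `X` by composing the action with a
measurable homomorphism `q : H → G`. -/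
def pullbackSystem {H G : Type*} [Group H] [TopologicalSpace H] [MeasurableSpace H]
    [Group G] [TopologicalSpace G] [MeasurableSpace G]
    (q : H →* G) (hq : Measurable q) (X : GSystem G) : GSystem H where
  carrier := X.carrier
  μ := X.μ
  prob := X.prob
  act h := X.act (q h)
  act_one x := by rw [show q 1 = 1 from map_one q]; exact X.act_one x
  act_mul h h' x := by rw [show q (h * h') = q h * q h' from map_mul q h h']; exact X.act_mul _ _ x
  jointly_meas := X.jointly_meas.comp ((hq.comp measurable_fst).prodMk measurable_snd)
  preserves h := X.preserves (q h)

/-! Factor maps, isomorphisms, joinings and inverse limits are all defined through the action of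
one group element at a time, plus data (measures, σ-algebras) that do not see the action, so each
of them survives restricting the action along `q`. -/

section Pullback

variable {H G : Type*} [Group H] [TopologicalSpace H] [MeasurableSpace H]
  [Group G] [TopologicalSpace G] [MeasurableSpace G] (q : H →* G) (hq : Measurable q)

theorem IsFactorMap.pullback {Y X : GSystem G} {f : Y.carrier → X.carrier}
    (hf : IsFactorMap Y X f) : IsFactorMap (pullbackSystem q hq Y) (pullbackSystem q hq X) f :=
  ⟨hf.1, hf.2.1, fun h => hf.2.2 (q h)⟩

theorem IsFactorOf.pullback {X Y : GSystem G} (h : IsFactorOf X Y) :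
    IsFactorOf (pullbackSystem q hq X) (pullbackSystem q hq Y) :=
  let ⟨f, hf⟩ := h
  ⟨f, hf.pullback q hq⟩

theorem Isomorphic.pullback {X Y : GSystem G} (h : Isomorphic X Y) :
    Isomorphic (pullbackSystem q hq X) (pullbackSystem q hq Y) :=
  let ⟨f, g, hf, hg, hgf, hfg⟩ := h
  ⟨f, g, hf.pullback q hq, hg.pullback q hq, hgf, hfg⟩

theorem IsJoining.pullback {ι : Type} {Xs : ι → GSystem G}
    {lam : Measure (∀ i, (Xs i).carrier)} (hlam : IsJoining Xs lam) :
    IsJoining (fun i => pullbackSystem q hq (Xs i)) lam :=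
  ⟨hlam.1, hlam.2.1, fun h => hlam.2.2 (q h)⟩

theorem pullbackSystem_joinSystem {ι : Type} [Countable ι] (Xs : ι → GSystem G)
    (lam : Measure (∀ i, (Xs i).carrier)) (hlam : IsJoining Xs lam) :
    pullbackSystem q hq (joinSystem Xs lam hlam) =
      joinSystem (fun i => pullbackSystem q hq (Xs i)) lam (hlam.pullback q hq) :=
  rfl

theorem IsInverseLimit.pullback {Z : GSystem G} {Xs : ℕ → GSystem G}
    (h : IsInverseLimit Z Xs) :
    IsInverseLimit (pullbackSystem q hq Z) (fun n => pullbackSystem q hq (Xs n)) := by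
  obtain ⟨π, hπ, hstep, hgen⟩ := h
  refine ⟨π, fun n => (hπ n).pullback q hq, fun n => ?_, hgen⟩
  obtain ⟨f, hf, hcomm⟩ := hstep n
  exact ⟨f, hf.pullback q hq, hcomm⟩

theorem IsIdempotentClass.preimage_pullbackSystem {C : Set (GSystem H)}
    (hC : IsIdempotentClass C) : IsIdempotentClass {X : GSystem G | pullbackSystem q hq X ∈ C} where
  iso_closed X hX Y hXY := hC.iso_closed _ hX _ (hXY.pullback q hq)
  joining_closed ι _ Xs lam hlam hXs := by
    rw [Set.mem_ofPred_eq, pullbackSystem_joinSystem]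
    exact hC.joining_closed ι _ lam _ hXs
  invLim_closed Xs Z hXs hZ := hC.invLim_closed _ _ hXs (hZ.pullback q hq)

theorem IsHereditary.preimage_pullbackSystem {C : Set (GSystem H)} (hC : IsHereditary C) :
    IsHereditary {X : GSystem G | pullbackSystem q hq X ∈ C} :=
  fun _ hX _ hYX => hC _ hX _ (hYX.pullback q hq)

end Pullback

theorem image_of_idempotent_class_is_idempotent_general
    {H : Type*} [Group H] [TopologicalSpace H] [MeasurableSpace H] [BorelSpace H]
    {G : Type*} [Group G] [TopologicalSpace G] [MeasurableSpace G] [BorelSpace G]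
    (q : H →* G) (hq : Continuous q)
    (C : Set (GSystem H)) (hC : IsIdempotentClass C) :
    IsIdempotentClass {X : GSystem G | pullbackSystem q hq.measurable X ∈ C} ∧
    (IsHereditary C →
      IsHereditary {X : GSystem G | pullbackSystem q hq.measurable X ∈ C}) :=
  ⟨hC.preimage_pullbackSystem q hq.measurable,
    fun hHer => hHer.preimage_pullbackSystem q hq.measurable⟩

/-- **Image classes are idempotent.**
If `q : H → G` is a continuous homomorphism of locally compact second countable groups and `𝖢`
is an idempotent class of `H`-systems, then the image class
`q_*𝖢 = {G-systems X : X^{q(·)} ∈ 𝖢}` is an idempotent class of `G`-systems, and it is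
hereditary whenever `𝖢` is hereditary. -/
theorem image_of_idempotent_class_is_idempotent
    {H : Type*} [Group H] [TopologicalSpace H] [IsTopologicalGroup H] [MeasurableSpace H]
    [BorelSpace H] [LocallyCompactSpace H] [SecondCountableTopology H]
    {G : Type*} [Group G] [TopologicalSpace G] [IsTopologicalGroup G] [MeasurableSpace G]
    [BorelSpace G] [LocallyCompactSpace G] [SecondCountableTopology G]
    (q : H →* G) (hq : Continuous q)
    (C : Set (GSystem H)) (hC : IsIdempotentClass C) :
    IsIdempotentClass {X : GSystem G | pullbackSystem q hq.measurable X ∈ C} ∧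
    (IsHereditary C →
      IsHereditary {X : GSystem G | pullbackSystem q hq.measurable X ∈ C}) :=
  image_of_idempotent_class_is_idempotent_general q hq C hC
end

section
/- If 𝖢 is an idempotent class of G-systems, then its downward closure 𝖢̂ := {G-systems X : X is a factor of some member of 𝖢} is a hereditary idempotent class. -/
/-!
Heredity is transitivity of factor maps, and an isomorphic copy is a factor.

Joinings: let `fᵢ : Yᵢ → Xᵢ` be factor maps with `Yᵢ ∈ 𝖢`, and let `νᵢ = condDistrib id fᵢ μ_{Yᵢ}`
be the disintegration of `μ_{Yᵢ}` over `fᵢ`. A joining `λ` of the `Xᵢ` lifts to the relatively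
independent joining `∫ ⊗ᵢ νᵢ(xᵢ) dλ(x)` of the `Yᵢ`. It is invariant because `νᵢ` is
equivariant (by uniqueness of disintegrations), and it projects onto `λ` because `νᵢ(t)` lives
on the fibre `fᵢ⁻¹{t}`. The kernel `x ↦ ⊗ᵢ νᵢ(xᵢ)` is built by realising each `νᵢ` as the law of
a measurable function of a uniform variable.

Inverse limits: the `πₙ : Z → Xₙ` generate the σ-algebra of `Z` modulo null sets, so
`z ↦ (πₙ z)ₙ` has a measurable a.e. left inverse, and `Z` is a factor of the joining of the `Xₙ`
obtained by pushing `μ_Z` forward.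
-/

open MeasureTheory

variable (G : Type*) [Group G] [TopologicalSpace G] [MeasurableSpace G]

variable {G}

open Function ProbabilityTheory

lemma exists_measurable_ae_leftInverse_of_forall_measurableSet
    {α β : Type*} [MeasurableSpace α] [StandardBorelSpace α] [Nonempty α] [mβ : MeasurableSpace β]
    {μ : Measure α} {Φ : α → β}
    (h : ∀ A : Set α, MeasurableSet A →
      ∃ B, MeasurableSet[mβ.comap Φ] B ∧ μ (symmDiff A B) = 0) :
    ∃ r : β → α, Measurable r ∧ ∀ᵐ z ∂μ, r (Φ z) = z := by
  classical
  -- Read off the coordinates of a Borel injection into `ℕ → Bool` from sets pulled back along `Φ`.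
  obtain ⟨e, he, he_inj⟩ := MeasurableSpace.measurable_injection_nat_bool_of_countablySeparated α
  have he' : MeasurableEmbedding e := he.measurableEmbedding he_inj
  have hcoord : ∀ n, ∃ S : Set β, MeasurableSet S ∧ ∀ᵐ z ∂μ, (e z n = true ↔ Φ z ∈ S) := by
    intro n
    obtain ⟨B, ⟨S, hS, rfl⟩, hAB⟩ :=
      h {z | e z n = true} (he ((measurable_pi_apply n) (measurableSet_singleton true)))
    refine ⟨S, hS, ?_⟩
    filter_upwards [measure_symmDiff_eq_zero_iff.1 hAB] with z hz
    exact Iff.of_eq hz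
  choose S hS hSe using hcoord
  let ψ : β → ℕ → Bool := fun w n => if w ∈ S n then true else false
  have hψ : Measurable ψ :=
    measurable_pi_lambda _ fun n => Measurable.ite (hS n) measurable_const measurable_const
  refine ⟨he'.invFun ∘ ψ, he'.measurable_invFun.comp hψ, ?_⟩
  filter_upwards [ae_all_iff.2 hSe] with z hz
  have hψΦ : ψ (Φ z) = e z := funext fun n => by simp [ψ, ← hz n]
  simp [hψΦ, he'.leftInverse_invFun z]

lemma MeasurableSpace.comap_pi {α ι : Type*} {X : ι → Type*} [m : ∀ i, MeasurableSpace (X i)]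
    (π : ∀ i, α → X i) :
    MeasurableSpace.comap (fun a i => π i a) MeasurableSpace.pi = ⨆ i, (m i).comap (π i) := by
  simp_rw [MeasurableSpace.pi, MeasurableSpace.comap_iSup, MeasurableSpace.comap_comp]
  rfl

lemma Measure.compProd_comap_of_leftInverse {α β : Type*} [MeasurableSpace α] [MeasurableSpace β]
    {ρ : Measure α} [SFinite ρ] {κ : Kernel α β} [IsSFiniteKernel κ] {b b' : α → α}
    (hb : Measurable b) (hb' : Measurable b') (hb'b : LeftInverse b' b) (hρ : ρ.map b = ρ) :
    ρ ⊗ₘ κ.comap b hb = (ρ ⊗ₘ κ).map (Prod.map b' id) := by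
  ext s hs
  have hs' : MeasurableSet (Prod.map b' id ⁻¹' s) := (hb'.prodMap measurable_id) hs
  rw [Measure.map_apply (hb'.prodMap measurable_id) hs, Measure.compProd_apply hs,
    Measure.compProd_apply hs']
  conv_rhs => rw [← hρ]
  rw [lintegral_map (Kernel.measurable_kernel_prodMk_left hs') hb]
  simp only [Kernel.comap_apply]
  congr! 3 with t
  ext y
  simp [hb'b t]

section CondDistrib

variable {α β : Type*} [MeasurableSpace α] [MeasurableSpace β] [StandardBorelSpace β]
  [Nonempty β] {μ : Measure β} [IsFiniteMeasure μ] {f : β → α}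

lemma condDistrib_id_map_self [StandardBorelSpace α] [Nonempty α] (hf : Measurable f) :
    ∀ᵐ t ∂μ.map f, (condDistrib id f μ t).map f = Measure.dirac t := by
  filter_upwards [condDistrib_comp f aemeasurable_id hf, condDistrib_self (μ := μ) f]
    with t h₁ h₂
  rw [← Kernel.map_apply _ hf, ← h₁]
  exact h₂

lemma condDistrib_id_map_ae_eq_comap (hf : Measurable f) {a : β → β}
    (ha : MeasurePreserving a μ μ) {b b' : α → α} (hb : Measurable b) (hb' : Measurable b')
    (hb'b : LeftInverse b' b) (hfa : ∀ᵐ y ∂μ, f (a y) = b (f y)) :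
    ∀ᵐ t ∂μ.map f, (condDistrib id f μ t).map a = condDistrib id f μ (b t) := by
  have hρ : (μ.map f).map b = μ.map f := by
    have hbf : b ∘ f =ᵐ[μ] f ∘ a := by
      filter_upwards [hfa] with y hy
      exact hy.symm
    rw [Measure.map_map hb hf, Measure.map_congr hbf, ← Measure.map_map hf ha.measurable,
      ha.map_eq]
  have hfa' : (fun y => (f y, a y)) =ᵐ[μ] fun y => (b' (f (a y)), a y) := by
    filter_upwards [hfa] with y hy
    rw [hy, hb'b]
  have hmap : μ.map (fun y => (f y, a y)) = μ.map f ⊗ₘ (condDistrib id f μ).comap b hb := by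
    rw [Measure.compProd_comap_of_leftInverse hb hb' hb'b hρ,
      compProd_map_condDistrib aemeasurable_id, Measure.map_map (by fun_prop) (by fun_prop),
      Measure.map_congr hfa']
    calc μ.map (fun y => (b' (f (a y)), a y))
        = (μ.map a).map (fun y => (b' (f y), y)) := by
          rw [Measure.map_map (by fun_prop) ha.measurable]
          rfl
      _ = _ := by
          rw [ha.map_eq]
          rfl
  filter_upwards [condDistrib_comp f aemeasurable_id ha.measurable,
    condDistrib_ae_eq_of_measure_eq_compProd f ha.aemeasurable hmap] with t h₁ h₂
  rw [← Kernel.map_apply _ ha.measurable, ← h₁]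
  exact h₂

end CondDistrib

lemma Kernel.exists_forall_eq_infinitePi {ι : Type*} {X Y : ι → Type*}
    [∀ i, MeasurableSpace (X i)] [∀ i, MeasurableSpace (Y i)] [∀ i, StandardBorelSpace (Y i)]
    [∀ i, Nonempty (Y i)] (κ : ∀ i, Kernel (X i) (Y i)) [∀ i, IsMarkovKernel (κ i)] :
    ∃ K : Kernel (∀ i, X i) (∀ i, Y i), ∀ x, K x = Measure.infinitePi fun i => κ i (x i) := by
  choose s hs hsκ using fun i => (κ i).exists_measurable_map_eq_unitInterval
  let T : (∀ i, X i) × (ι → unitInterval) → ∀ i, Y i := fun p i => s i (p.1 i) (p.2 i)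
  have hT : Measurable T := measurable_pi_lambda _ fun i => (hs i).comp
    (((measurable_pi_apply i).comp measurable_fst).prodMk
      ((measurable_pi_apply i).comp measurable_snd))
  let P := Measure.infinitePi fun _ : ι => (volume : Measure unitInterval)
  refine ⟨⟨fun x => (P.map (Prod.mk x)).map T,
    (Measure.measurable_map T hT).comp Measurable.map_prodMk_left⟩, fun x => ?_⟩
  simp_rw [← hsκ]
  rw [← Measure.infinitePi_map_pi _ fun i => (hs i).of_uncurry_left]
  exact Measure.map_map hT measurable_prodMk_left

section Systems

variable {G : Type*} [Group G] [MeasurableSpace G]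

instance (X : GSystem G) : IsProbabilityMeasure X.μ := X.prob

instance (X : GSystem G) : Nonempty X.carrier := nonempty_of_isProbabilityMeasure X.μ

lemma GSystem.act_inv_act (X : GSystem G) (g : G) (x : X.carrier) :
    X.act g⁻¹ (X.act g x) = x := by
  rw [← X.act_mul, inv_mul_cancel, X.act_one]

namespace IsFactorMap

variable {X Y Z : GSystem G}

lemma comp {v : Y.carrier → X.carrier} {u : Z.carrier → Y.carrier}
    (hv : IsFactorMap Y X v) (hu : IsFactorMap Z Y u) : IsFactorMap Z X (v ∘ u) := by
  obtain ⟨hvm, hvμ, hv_eq⟩ := hv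
  obtain ⟨hum, huμ, hu_eq⟩ := hu
  refine ⟨hvm.comp hum, by rw [← Measure.map_map hvm hum, huμ, hvμ], fun g => ?_⟩
  have hv_eq' : ∀ᵐ z ∂Z.μ, v (Y.act g (u z)) = X.act g (v (u z)) :=
    ae_of_ae_map hum.aemeasurable (huμ ▸ hv_eq g)
  filter_upwards [hu_eq g, hv_eq'] with z hz hz'
  simp only [Function.comp_apply, hz, hz']

lemma of_ae_leftInverse {Φ : Z.carrier → Y.carrier} {r : Y.carrier → Z.carrier}
    (hΦ : IsFactorMap Z Y Φ) (hr : Measurable r) (hrΦ : ∀ᵐ z ∂Z.μ, r (Φ z) = z) :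
    IsFactorMap Y Z r := by
  obtain ⟨hΦm, hΦμ, hΦ_eq⟩ := hΦ
  refine ⟨hr, ?_, fun g => ?_⟩
  · rw [← hΦμ, Measure.map_map hr hΦm]
    exact (Measure.map_congr hrΦ).trans Measure.map_id
  · have hact := Z.preserves g
    rw [← hΦμ]
    refine (ae_map_iff hΦm.aemeasurable
      (measurableSet_eq_fun (hr.comp (Y.preserves g).measurable) (hact.measurable.comp hr))).2 ?_
    have hrΦ' : ∀ᵐ z ∂Z.μ, r (Φ (Z.act g z)) = Z.act g z :=
      hact.quasiMeasurePreserving.ae hrΦ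
    filter_upwards [hΦ_eq g, hrΦ', hrΦ] with z h₁ h₂ h₃
    simp only [Function.comp_apply, ← h₁, h₂, h₃]

end IsFactorMap

lemma Isomorphic.isFactorOf {X Y : GSystem G} (h : Isomorphic X Y) : IsFactorOf Y X :=
  let ⟨f, _, hf, _⟩ := h; ⟨f, hf⟩

section PiFactor

variable {ι : Type} [Countable ι] {Z : GSystem G} {Xs : ι → GSystem G}
  {π : ∀ i, Z.carrier → (Xs i).carrier}

lemma isJoining_map_pi_s17 (hπ : ∀ i, IsFactorMap Z (Xs i) (π i)) :
    IsJoining Xs (Z.μ.map fun z i => π i z) := by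
  have hΦ : Measurable fun z i => π i z := measurable_pi_lambda _ fun i => (hπ i).1
  refine ⟨Measure.isProbabilityMeasure_map hΦ.aemeasurable, fun i => ?_, fun g => ?_⟩
  · rw [Measure.map_map (measurable_pi_apply i) hΦ]
    exact (hπ i).2.1
  · have hact : Measurable fun (x : ∀ i, (Xs i).carrier) i => (Xs i).act g (x i) :=
      measurable_pi_lambda _ fun i => ((Xs i).preserves g).measurable.comp (measurable_pi_apply i)
    have hcomm : ∀ᵐ z ∂Z.μ, (fun i => (Xs i).act g (π i z)) = fun i => π i (Z.act g z) := by
      filter_upwards [ae_all_iff.2 fun i => (hπ i).2.2 g] with z hz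
      exact funext fun i => (hz i).symm
    rw [Measure.map_map hact hΦ]
    refine (Measure.map_congr hcomm).trans ?_
    conv_rhs => rw [← (Z.preserves g).map_eq, Measure.map_map hΦ (Z.preserves g).measurable]
    rfl

lemma isFactorMap_pi_s17 (hπ : ∀ i, IsFactorMap Z (Xs i) (π i)) :
    IsFactorMap Z (joinSystem Xs _ (isJoining_map_pi_s17 hπ)) fun z i => π i z := by
  refine ⟨measurable_pi_lambda _ fun i => (hπ i).1, rfl, fun g => ?_⟩
  filter_upwards [ae_all_iff.2 fun i => (hπ i).2.2 g] with z hz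
  exact funext hz

end PiFactor

lemma IsInverseLimit.exists_isFactorOf_joinSystem {Z : GSystem G} {Xs : ℕ → GSystem G}
    (hZ : IsInverseLimit Z Xs) :
    ∃ lam hlam, IsFactorOf Z (joinSystem Xs lam hlam) := by
  obtain ⟨π, hπ, -, hgen⟩ := hZ
  obtain ⟨r, hr, hrΦ⟩ := exists_measurable_ae_leftInverse_of_forall_measurableSet
    (Φ := fun z n => π n z) (by rwa [MeasurableSpace.comap_pi])
  exact ⟨_, _, r, (isFactorMap_pi_s17 hπ).of_ae_leftInverse hr hrΦ⟩

section JoiningLift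

variable {ι : Type} {Xs Ys : ι → GSystem G} {f : ∀ i, (Ys i).carrier → (Xs i).carrier}
  {lam : Measure (∀ i, (Xs i).carrier)}

lemma IsJoining.ae_forall_apply [Countable ι] (hlam : IsJoining Xs lam)
    {p : ∀ i, (Xs i).carrier → Prop} (hp : ∀ i, ∀ᵐ t ∂(Xs i).μ, p i t) :
    ∀ᵐ x ∂lam, ∀ i, p i (x i) :=
  ae_all_iff.2 fun i =>
    ae_of_ae_map (measurable_pi_apply i).aemeasurable ((hlam.2.1 i).symm ▸ hp i)

variable {K : Kernel (∀ i, (Xs i).carrier) (∀ i, (Ys i).carrier)}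

lemma map_eval_comp_of_eq_infinitePi_condDistrib (hf : ∀ i, IsFactorMap (Ys i) (Xs i) (f i))
    (hlam : IsJoining Xs lam)
    (hK : ∀ x, K x = Measure.infinitePi fun i => condDistrib id (f i) (Ys i).μ (x i)) (i : ι) :
    (K ∘ₘ lam).map (fun y => y i) = (Ys i).μ := by
  have hKi : K.map (fun y => y i) = (condDistrib id (f i) (Ys i).μ).comap (fun x => x i)
      (measurable_pi_apply i) := by
    ext1 x
    rw [Kernel.map_apply _ (measurable_pi_apply i), hK, Measure.infinitePi_map_eval]
    rfl
  rw [Measure.map_comp _ _ (measurable_pi_apply i), hKi, ← Kernel.comp_deterministic_eq_comap,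
    ← Measure.comp_assoc, Measure.deterministic_comp_eq_map, hlam.2.1 i, ← (hf i).2.1,
    condDistrib_comp_map (hf i).1.aemeasurable aemeasurable_id, Measure.map_id]

lemma map_comp_of_eq_infinitePi_condDistrib [Countable ι]
    (hf : ∀ i, IsFactorMap (Ys i) (Xs i) (f i)) (hlam : IsJoining Xs lam)
    (hK : ∀ x, K x = Measure.infinitePi fun i => condDistrib id (f i) (Ys i).μ (x i)) :
    (K ∘ₘ lam).map (fun y i => f i (y i)) = lam := by
  have hF : Measurable fun (y : ∀ i, (Ys i).carrier) i => f i (y i) :=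
    measurable_pi_lambda _ fun i => (hf i).1.comp (measurable_pi_apply i)
  have hfib : ∀ᵐ x ∂lam, ∀ i, (condDistrib id (f i) (Ys i).μ (x i)).map (f i) = .dirac (x i) :=
    hlam.ae_forall_apply fun i => by
      have := condDistrib_id_map_self (μ := (Ys i).μ) (hf i).1
      rwa [(hf i).2.1] at this
  rw [Measure.map_comp _ _ hF]
  calc (K.map _) ∘ₘ lam = Kernel.deterministic id measurable_id ∘ₘ lam := Measure.comp_congr ?_
    _ = lam := by rw [Measure.deterministic_comp_eq_map, Measure.map_id]
  filter_upwards [hfib] with x hx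
  rw [Kernel.map_apply _ hF, hK, Measure.infinitePi_map_pi _ fun i => (hf i).1,
    Kernel.deterministic_apply]
  simp_rw [hx]
  exact Measure.infinitePi_dirac x

lemma map_act_comp_of_eq_infinitePi_condDistrib [Countable ι]
    (hf : ∀ i, IsFactorMap (Ys i) (Xs i) (f i)) (hlam : IsJoining Xs lam)
    (hK : ∀ x, K x = Measure.infinitePi fun i => condDistrib id (f i) (Ys i).μ (x i)) (g : G) :
    (K ∘ₘ lam).map (fun y i => (Ys i).act g (y i)) = K ∘ₘ lam := by
  have hA : Measurable fun (y : ∀ i, (Ys i).carrier) i => (Ys i).act g (y i) :=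
    measurable_pi_lambda _ fun i => ((Ys i).preserves g).measurable.comp (measurable_pi_apply i)
  have hB : Measurable fun (x : ∀ i, (Xs i).carrier) i => (Xs i).act g (x i) :=
    measurable_pi_lambda _ fun i => ((Xs i).preserves g).measurable.comp (measurable_pi_apply i)
  have hequiv : ∀ᵐ x ∂lam, ∀ i, (condDistrib id (f i) (Ys i).μ (x i)).map ((Ys i).act g) =
      condDistrib id (f i) (Ys i).μ ((Xs i).act g (x i)) :=
    hlam.ae_forall_apply fun i => by
      have := condDistrib_id_map_ae_eq_comap (hf i).1 ((Ys i).preserves g)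
        ((Xs i).preserves g).measurable ((Xs i).preserves g⁻¹).measurable
        ((Xs i).act_inv_act g) ((hf i).2.2 g)
      rwa [(hf i).2.1] at this
  rw [Measure.map_comp _ _ hA]
  calc (K.map _) ∘ₘ lam = K.comap _ hB ∘ₘ lam := Measure.comp_congr ?_
    _ = K ∘ₘ lam.map _ := by
      rw [← Kernel.comp_deterministic_eq_comap, ← Measure.comp_assoc,
        Measure.deterministic_comp_eq_map]
    _ = K ∘ₘ lam := by rw [hlam.2.2 g]
  filter_upwards [hequiv] with x hx
  rw [Kernel.map_apply _ hA, Kernel.comap_apply, hK, hK,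
    Measure.infinitePi_map_pi _ fun i => ((Ys i).preserves g).measurable]
  simp_rw [hx]

lemma exists_isJoining_isFactorMap_pi [Countable ι]
    (hf : ∀ i, IsFactorMap (Ys i) (Xs i) (f i)) (hlam : IsJoining Xs lam) :
    ∃ lam' hlam', IsFactorMap (joinSystem Ys lam' hlam') (joinSystem Xs lam hlam)
      fun y i => f i (y i) := by
  obtain ⟨K, hK⟩ := Kernel.exists_forall_eq_infinitePi fun i => condDistrib id (f i) (Ys i).μ
  have : IsMarkovKernel K := ⟨fun x => hK x ▸ inferInstance⟩
  have := hlam.1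
  have hlam' : IsJoining Ys (K ∘ₘ lam) := ⟨inferInstance,
    map_eval_comp_of_eq_infinitePi_condDistrib hf hlam hK,
    map_act_comp_of_eq_infinitePi_condDistrib hf hlam hK⟩
  refine ⟨_, hlam', measurable_pi_lambda _ fun i => (hf i).1.comp (measurable_pi_apply i),
    map_comp_of_eq_infinitePi_condDistrib hf hlam hK, fun g => ?_⟩
  filter_upwards [hlam'.ae_forall_apply fun i => (hf i).2.2 g] with y hy
  exact funext hy

end JoiningLift

end Systems

theorem downward_closure_is_hereditary_idempotent_general
    {G : Type*} [Group G] [MeasurableSpace G]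
    (C : Set (GSystem G)) (hC : IsIdempotentClass C) :
    IsIdempotentClass {X : GSystem G | ∃ Y ∈ C, IsFactorOf X Y} ∧
    IsHereditary {X : GSystem G | ∃ Y ∈ C, IsFactorOf X Y} := by
  have hher : IsHereditary {X : GSystem G | ∃ Y ∈ C, IsFactorOf X Y} := by
    rintro X ⟨W, hW, u, hu⟩ Y ⟨v, hv⟩
    exact ⟨W, hW, v ∘ u, hv.comp hu⟩
  have hjoin : ∀ (ι : Type) [Countable ι] (Xs : ι → GSystem G) lam (hlam : IsJoining Xs lam),
      (∀ i, ∃ Y ∈ C, IsFactorOf (Xs i) Y) → ∃ Y ∈ C, IsFactorOf (joinSystem Xs lam hlam) Y := by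
    intro ι _ Xs lam hlam hXs
    choose Ys hYs f hf using hXs
    obtain ⟨lam', hlam', hF⟩ := exists_isJoining_isFactorMap_pi hf hlam
    exact ⟨_, hC.joining_closed ι Ys lam' hlam' hYs, _, hF⟩
  refine ⟨⟨fun X hX Y hXY => hher X hX Y hXY.isFactorOf, hjoin, fun Xs Z hXs hZ => ?_⟩, hher⟩
  obtain ⟨lam, hlam, hZ⟩ := hZ.exists_isFactorOf_joinSystem
  exact hher _ (hjoin ℕ Xs lam hlam hXs) Z hZ

/-- **Downward closures of idempotent classes.**
If `𝖢` is an idempotent class of `G`-systems, then its downward closure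
`𝖢̂ = {X : X is a factor of some member of 𝖢}` is a hereditary idempotent class. -/
theorem downward_closure_is_hereditary_idempotent
    {G : Type*} [Group G] [TopologicalSpace G] [IsTopologicalGroup G] [MeasurableSpace G]
    [BorelSpace G] [LocallyCompactSpace G] [SecondCountableTopology G]
    (C : Set (GSystem G)) (hC : IsIdempotentClass C) :
    IsIdempotentClass {X : GSystem G | ∃ Y ∈ C, IsFactorOf X Y} ∧
    IsHereditary {X : GSystem G | ∃ Y ∈ C, IsFactorOf X Y} :=
  downward_closure_is_hereditary_idempotent_general C hC
end

section
/- (Continuous-time van der Corput estimate.) Let u : [0, ∞) → ℌ be a bounded, strongly measurable map into a real Hilbert space ℌ. If the averages (1/S)∫₀^S (1/T)∫₀^T ⟨u(t+s), u(t)⟩ dt ds converge to 0 in the iterated limit T → ∞ and then S → ∞ (i.e. limsup_{S→∞} limsup_{T→∞} |(1/S)∫₀^S (1/T)∫₀^T ⟨u(t+s), u(t)⟩ dt ds| = 0), then the vector averages (1/T)∫₀^T u(t) dt converge to 0 in norm as T → ∞. Equivalently, if (1/T)∫₀^T u(t) dt does not tend to 0, then the iterated scalar averages do not tend to 0. -/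
/-!
Put `v(t) = ∫₀^S u(t+s) ds` and `c_T(r) = (1/T) ∫₀^T ⟪u(t+r), u(t)⟫ dt`. Then
`S ∫₀^T u = ∫₀^T v + O(S²)`, and Cauchy–Schwarz gives `‖∫₀^T v‖² ≤ T ∫₀^T ‖v‖²`. Expanding
`‖v(t)‖²` as a double integral over `s, s' ∈ [0, S]` and shifting `t` by `min s s'` turns each row
`∫₀^T ∫₀^S ⟪u(t+s), u(t+s')⟫ ds' dt` into `T (∫₀^s c_T + ∫₀^(S-s) c_T) + O(S²)`. Hence
`‖(1/T) ∫₀^T u‖² ≤ 4M/S + O(S/T + S²/T²)` whenever the cumulative correlations `∫₀^σ c_T` are at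
most `M` for `σ ∈ [0, S]`. These are `C²`-Lipschitz in `σ` uniformly in `T`, so by compactness of
`[S₀, S]` the hypothesis, which controls them one `σ` at a time, bounds them uniformly for large
`T` by `C² S₀ + 2εS`; letting `T → ∞`, then `S → ∞` and `ε → 0` gives the claim.
-/

open MeasureTheory Filter Set intervalIntegral RealInnerProductSpace Topology

section BoundedIntegrands

variable {F : Type*} [NormedAddCommGroup F] {C : ℝ}

lemma intervalIntegrable_of_norm_le {f : ℝ → F} (hf : AEStronglyMeasurable f)
    (hC : ∀ x, ‖f x‖ ≤ C) (a b : ℝ) : IntervalIntegrable f volume a b :=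
  intervalIntegrable_const.mono_fun' hf.restrict (ae_of_all _ hC)

lemma integrableOn_uIoc_prod_of_norm_le {f : ℝ × ℝ → F} (hf : AEStronglyMeasurable f)
    (hC : ∀ x, ‖f x‖ ≤ C) (a b c d : ℝ) : IntegrableOn f (uIoc a b ×ˢ uIoc c d) := by
  have hbdd : Bornology.IsBounded (uIoc a b ×ˢ uIoc c d) :=
    (Metric.isBounded_Icc _ _ |>.subset uIoc_subset_uIcc).prod
      (Metric.isBounded_Icc _ _ |>.subset uIoc_subset_uIcc)
  exact .of_bound hbdd.measure_lt_top hf.restrict C (ae_of_all _ hC)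

lemma MeasureTheory.StronglyMeasurable.intervalIntegral_prod_right' [NormedSpace ℝ F] {α : Type*}
    [MeasurableSpace α] {f : α × ℝ → F} (hf : StronglyMeasurable f) (a b : ℝ) :
    StronglyMeasurable fun x => ∫ y in a..b, f (x, y) :=
  hf.integral_prod_right'.sub hf.integral_prod_right'

lemma norm_integral_comp_add_right_sub_le [NormedSpace ℝ F] {g : ℝ → F}
    (hg : AEStronglyMeasurable g) (hC : ∀ x, ‖g x‖ ≤ C) (T d : ℝ) :
    ‖(∫ t in (0:ℝ)..T, g (t + d)) - ∫ t in (0:ℝ)..T, g t‖ ≤ 2 * |d| * C := by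
  have hi := intervalIntegrable_of_norm_le hg hC
  rw [integral_comp_add_right, zero_add, integral_interval_sub_interval_comm (hi _ _) (hi _ _)
    (hi _ _)]
  have hd : ∀ a b, |b - a| = |d| → ‖∫ t in a..b, g t‖ ≤ C * |d| := fun a b hab =>
    hab ▸ norm_integral_le_of_norm_le_const fun x _ => hC x
  calc ‖(∫ t in d..0, g t) - ∫ t in T + d..T, g t‖
      ≤ ‖∫ t in d..0, g t‖ + ‖∫ t in T + d..T, g t‖ := norm_sub_le _ _
    _ ≤ 2 * |d| * C := by
        linarith [hd d 0 (by simp [abs_neg]), hd (T + d) T (by rw [sub_add_cancel_left, abs_neg])]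

lemma sq_norm_integral_le [NormedSpace ℝ F] [CompleteSpace F] {α : Type*} [MeasurableSpace α]
    {μ : Measure α} [IsFiniteMeasure μ] {f : α → F} (hf : Integrable f μ)
    (hf2 : Integrable (fun x => ‖f x‖ ^ 2) μ) :
    ‖∫ x, f x ∂μ‖ ^ 2 ≤ μ.real univ * ∫ x, ‖f x‖ ^ 2 ∂μ := by
  rcases eq_zero_or_neZero μ with rfl | _
  · simp
  have hconv : ConvexOn ℝ univ fun x : F => ‖x‖ ^ 2 :=
    convexOn_univ_norm.pow (fun x _ => norm_nonneg x) 2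
  have hJensen := hconv.map_average_le (continuous_norm.pow 2).continuousOn isClosed_univ
    (ae_of_all _ fun _ => mem_univ _) hf hf2
  rw [average_eq, average_eq, norm_smul, mul_pow, Real.norm_eq_abs, sq_abs, smul_eq_mul] at hJensen
  have := mul_le_mul_of_nonneg_left hJensen (sq_nonneg (μ.real univ))
  field_simp at this
  linarith

lemma integral_comp_abs_sub [NormedSpace ℝ F] {f : ℝ → F} (hf : StronglyMeasurable f)
    (hC : ∀ x, ‖f x‖ ≤ C) {s S : ℝ} (hs : s ∈ Icc 0 S) :
    ∫ x in (0:ℝ)..S, f |s - x| = (∫ x in (0:ℝ)..s, f x) + ∫ x in (0:ℝ)..S - s, f x := by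
  have hi : ∀ a b, IntervalIntegrable (fun x => f |s - x|) volume a b :=
    intervalIntegrable_of_norm_le
      (hf.comp_measurable (measurable_const.sub measurable_id).abs).aestronglyMeasurable
      (fun x => hC |s - x|)
  have h₁ : ∫ x in (0:ℝ)..s, f |s - x| = ∫ x in (0:ℝ)..s, f x := by
    have := integral_comp_sub_left f s (a := 0) (b := s)
    rw [sub_self, sub_zero] at this
    rw [← this]
    refine integral_congr fun x hx => ?_
    rw [uIcc_of_le hs.1] at hx
    simp only [abs_of_nonneg (sub_nonneg.2 hx.2)]
  have h₂ : ∫ x in s..S, f |s - x| = ∫ x in (0:ℝ)..S - s, f x := by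
    have := integral_comp_sub_right f s (a := s) (b := S)
    rw [sub_self] at this
    rw [← this]
    refine integral_congr fun x hx => ?_
    rw [uIcc_of_le hs.2] at hx
    simp only [abs_sub_comm s x, abs_of_nonneg (sub_nonneg.2 hx.1)]
  rw [← integral_add_adjacent_intervals (hi 0 s) (hi s S), h₁, h₂]

lemma norm_smul_integral_sub_integral_window_le [NormedSpace ℝ F] [CompleteSpace F] {w : ℝ → F}
    (hm : StronglyMeasurable w) (hw : ∀ t, ‖w t‖ ≤ C) {S : ℝ} (hS : 0 ≤ S) (T : ℝ) :
    ‖S • (∫ t in (0:ℝ)..T, w t) - ∫ t in (0:ℝ)..T, ∫ s in (0:ℝ)..S, w (t + s)‖ ≤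
      2 * S ^ 2 * C := by
  have hmF : StronglyMeasurable fun p : ℝ × ℝ => w (p.2 + p.1) :=
    hm.comp_measurable (measurable_snd.add measurable_fst)
  have hshifted : IntervalIntegrable (fun s => ∫ t in (0:ℝ)..T, w (t + s)) volume 0 S :=
    intervalIntegrable_of_norm_le (hmF.intervalIntegral_prod_right' 0 T).aestronglyMeasurable
      (fun s => norm_integral_le_of_norm_le_const fun t _ => hw (t + s)) 0 S
  have hfubini : ∫ t in (0:ℝ)..T, ∫ s in (0:ℝ)..S, w (t + s) =
      ∫ s in (0:ℝ)..S, ∫ t in (0:ℝ)..T, w (t + s) :=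
    intervalIntegral_intervalIntegral_swap
      (integrableOn_uIoc_prod_of_norm_le
        (hm.comp_measurable (measurable_fst.add measurable_snd)).aestronglyMeasurable
        (fun p => hw _) _ _ _ _)
  have hconst : S • (∫ t in (0:ℝ)..T, w t) = ∫ _ in (0:ℝ)..S, ∫ t in (0:ℝ)..T, w t := by
    rw [intervalIntegral.integral_const, sub_zero]
  rw [hfubini, hconst, ← integral_sub intervalIntegrable_const hshifted]
  calc ‖∫ s in (0:ℝ)..S, ((∫ t in (0:ℝ)..T, w t) - ∫ t in (0:ℝ)..T, w (t + s))‖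
      ≤ 2 * S * C * |S - 0| := norm_integral_le_of_norm_le_const fun s hs => by
        rw [uIoc_of_le hS] at hs
        rw [norm_sub_rev]
        calc _ ≤ 2 * |s| * C := norm_integral_comp_add_right_sub_le hm.aestronglyMeasurable hw T s
          _ ≤ 2 * S * C := by
            rw [abs_of_pos hs.1]; gcongr; exacts [(norm_nonneg _).trans (hw 0), hs.2]
    _ = 2 * S ^ 2 * C := by rw [sub_zero, abs_of_nonneg hS]; ring

lemma sq_norm_intervalIntegral_le [NormedSpace ℝ F] [CompleteSpace F] {f : ℝ → F} {a b : ℝ}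
    (hab : a ≤ b) (hf : IntervalIntegrable f volume a b)
    (hf2 : IntervalIntegrable (fun t => ‖f t‖ ^ 2) volume a b) :
    ‖∫ t in a..b, f t‖ ^ 2 ≤ (b - a) * ∫ t in a..b, ‖f t‖ ^ 2 := by
  have := sq_norm_integral_le ((intervalIntegrable_iff_integrableOn_Ioc_of_le hab).1 hf)
    ((intervalIntegrable_iff_integrableOn_Ioc_of_le hab).1 hf2)
  rw [integral_of_le hab, integral_of_le hab]
  simpa [Real.volume_real_Ioc_of_le hab] using this

lemma norm_one_div_mul_integral_le {f : ℝ → ℝ} {K : ℝ} (hf : ∀ x, ‖f x‖ ≤ K) (T : ℝ) :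
    ‖(1 / T) * ∫ t in (0:ℝ)..T, f t‖ ≤ K := by
  have hK : 0 ≤ K := (norm_nonneg _).trans (hf 0)
  rcases eq_or_ne T 0 with rfl | hT
  · simpa using hK
  have h : ‖∫ t in (0:ℝ)..T, f t‖ ≤ K * |T - 0| :=
    norm_integral_le_of_norm_le_const fun t _ => hf t
  rw [sub_zero] at h
  rw [norm_mul, norm_div, norm_one, Real.norm_eq_abs]
  calc 1 / |T| * ‖∫ t in (0:ℝ)..T, f t‖ ≤ 1 / |T| * (K * |T|) := by gcongr
    _ = K := by field_simp

lemma norm_indicator_Ici_le {u : ℝ → F} (hC : ∀ t, 0 ≤ t → ‖u t‖ ≤ C) (t : ℝ) :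
    ‖(Ici 0).indicator u t‖ ≤ max C 0 := by
  by_cases ht : 0 ≤ t
  · rw [indicator_of_mem (mem_Ici.2 ht)]
    exact (hC t ht).trans (le_max_left _ _)
  · rw [indicator_of_notMem (notMem_Ici.2 (not_le.1 ht)), norm_zero]
    exact le_max_right _ _

lemma intervalIntegral_indicator_Ici [NormedSpace ℝ F] {f : ℝ → F} {T : ℝ} (hT : 0 ≤ T) :
    ∫ t in (0:ℝ)..T, (Ici 0).indicator f t = ∫ t in (0:ℝ)..T, f t :=
  integral_congr fun _ ht => indicator_of_mem (uIcc_of_le hT ▸ ht).1 f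

end BoundedIntegrands

theorem IsCompact.eventually_forall_lt_add {ι X : Type*} [TopologicalSpace X] {F : ι → X → ℝ}
    {K : Set X} (hK : IsCompact K) (hF : Equicontinuous F) {l : Filter ι} {c η : ℝ}
    (hη : 0 < η) (h : ∀ x ∈ K, ∀ᶠ i in l, F i x < c) : ∀ᶠ i in l, ∀ x ∈ K, F i x < c + η := by
  have hprod : {p : ι × X | F p.1 p.2 < c + η} ∈ l ×ˢ 𝓝ˢ K :=
    hK.mem_prod_nhdsSet_of_forall fun x hx => by
      filter_upwards [(h x hx).prod_mk (Metric.equicontinuousAt_iff_right.1 (hF x) η hη)]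
        with p hp
      have := hp.2 p.1
      rw [Real.dist_eq, abs_lt] at this
      linarith [hp.1]
  exact Eventually.curry hprod |>.mono fun _ hi => hi.self_of_nhdsSet

lemma eventually_eventually_lt_of_limsup_limsup_eq_zero {α β : Type*} {la : Filter α}
    {lb : Filter β} [lb.NeBot] {f : α → β → ℝ} {M : ℝ} (hM : ∀ a b, |f a b| ≤ M)
    (h : limsup (fun a => limsup (fun b => |f a b|) lb) la = 0) {ε : ℝ} (hε : 0 < ε) :
    ∀ᶠ a in la, ∀ᶠ b in lb, |f a b| < ε := by
  have hinner : ∀ a, IsBoundedUnder (· ≤ ·) lb fun b => |f a b| := fun a =>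
    isBoundedUnder_of_eventually_le (Eventually.of_forall (hM a))
  have houter : IsBoundedUnder (· ≤ ·) la fun a => limsup (fun b => |f a b|) lb :=
    isBoundedUnder_of_eventually_le <| Eventually.of_forall fun a =>
      limsup_le_of_le (isCoboundedUnder_le_of_le lb fun b => abs_nonneg _)
        (Eventually.of_forall (hM a))
  filter_upwards [eventually_lt_of_limsup_lt (h ▸ hε) houter] with a ha
  exact eventually_lt_of_limsup_lt ha (hinner a)

section Correlation

variable {E : Type*} [NormedAddCommGroup E] [InnerProductSpace ℝ E]

noncomputable def correlation (w : ℝ → E) (T s : ℝ) : ℝ :=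
  (1 / T) * ∫ t in (0:ℝ)..T, ⟪w (t + s), w t⟫

noncomputable def correlationIntegral (w : ℝ → E) (T σ : ℝ) : ℝ :=
  ∫ s in (0:ℝ)..σ, correlation w T s

variable {w : ℝ → E} {C : ℝ}

lemma norm_inner_le_sq (hw : ∀ t, ‖w t‖ ≤ C) (a b : ℝ) : ‖⟪w a, w b⟫‖ ≤ C ^ 2 :=
  (norm_inner_le_norm _ _).trans <| by
    rw [sq]; exact mul_le_mul (hw a) (hw b) (norm_nonneg _) ((norm_nonneg _).trans (hw a))

lemma norm_correlation_le (hw : ∀ t, ‖w t‖ ≤ C) (T s : ℝ) : ‖correlation w T s‖ ≤ C ^ 2 :=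
  norm_one_div_mul_integral_le (fun t => norm_inner_le_sq hw (t + s) t) T

lemma stronglyMeasurable_correlation (hm : StronglyMeasurable w) (T : ℝ) :
    StronglyMeasurable (correlation w T) := by
  have h : StronglyMeasurable fun p : ℝ × ℝ => ⟪w (p.2 + p.1), w p.2⟫ :=
    (hm.comp_measurable (measurable_snd.add measurable_fst)).inner
      (hm.comp_measurable measurable_snd)
  exact stronglyMeasurable_const.mul (h.intervalIntegral_prod_right' 0 T)

lemma lipschitzWith_correlationIntegral (hm : StronglyMeasurable w) (hw : ∀ t, ‖w t‖ ≤ C)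
    (T : ℝ) : LipschitzWith (C ^ 2).toNNReal (correlationIntegral w T) := by
  refine LipschitzWith.of_dist_le_mul fun σ σ' => ?_
  have hi := intervalIntegrable_of_norm_le
    (stronglyMeasurable_correlation hm T).aestronglyMeasurable (norm_correlation_le hw T)
  rw [correlationIntegral, correlationIntegral, dist_eq_norm,
    integral_interval_sub_left (hi 0 σ) (hi 0 σ'), Real.toNNReal_of_nonneg (sq_nonneg C),
    NNReal.coe_mk, Real.dist_eq]
  exact norm_integral_le_of_norm_le_const fun s _ => norm_correlation_le hw T s

lemma correlationIntegral_indicator_Ici {S T : ℝ} (hS : 0 ≤ S) (hT : 0 ≤ T) :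
    correlationIntegral ((Ici 0).indicator w) T S = correlationIntegral w T S := by
  refine integral_congr fun s hs => congrArg _ (integral_congr fun t ht => ?_)
  rw [uIcc_of_le hS] at hs
  rw [uIcc_of_le hT] at ht
  simp only [indicator_of_mem (mem_Ici.2 ht.1), indicator_of_mem (mem_Ici.2 (add_nonneg ht.1 hs.1))]

lemma integral_inner_comp_add_le (hm : StronglyMeasurable w) (hw : ∀ t, ‖w t‖ ≤ C) {T : ℝ}
    (hT : 0 < T) {s s' S : ℝ} (hs : s ∈ Icc 0 S) (hs' : s' ∈ Icc 0 S) :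
    ∫ t in (0:ℝ)..T, ⟪w (t + s), w (t + s')⟫ ≤ T * correlation w T |s - s'| + 2 * S * C ^ 2 := by
  wlog h : s' ≤ s generalizing s s'
  · calc ∫ t in (0:ℝ)..T, ⟪w (t + s), w (t + s')⟫
        = ∫ t in (0:ℝ)..T, ⟪w (t + s'), w (t + s)⟫ := integral_congr fun t _ => real_inner_comm _ _
      _ ≤ T * correlation w T |s' - s| + 2 * S * C ^ 2 := this hs' hs (le_of_not_ge h)
      _ = T * correlation w T |s - s'| + 2 * S * C ^ 2 := by rw [abs_sub_comm]
  set g : ℝ → ℝ := fun τ => ⟪w (τ + (s - s')), w τ⟫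
  have hg : StronglyMeasurable g := (hm.comp_measurable (measurable_add_const _)).inner hm
  have hshift := norm_integral_comp_add_right_sub_le hg.aestronglyMeasurable
    (fun τ => norm_inner_le_sq hw _ _) T s'
  have e₁ : ∫ t in (0:ℝ)..T, ⟪w (t + s), w (t + s')⟫ = ∫ t in (0:ℝ)..T, g (t + s') :=
    integral_congr fun t _ => by simp only [g, add_add_sub_cancel]
  have e₂ : T * correlation w T |s - s'| = ∫ t in (0:ℝ)..T, g t := by
    rw [abs_of_nonneg (sub_nonneg.2 h), correlation, ← mul_assoc, mul_one_div_cancel hT.ne',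
      one_mul]
  have hs'S : 2 * |s'| * C ^ 2 ≤ 2 * S * C ^ 2 := by
    rw [abs_of_nonneg hs'.1]; gcongr; exact hs'.2
  rw [e₁, e₂]
  linarith [le_abs_self ((∫ t in (0:ℝ)..T, g (t + s')) - ∫ t in (0:ℝ)..T, g t),
    (Real.norm_eq_abs _).symm.trans_le hshift]

lemma integral_inner_window_le [CompleteSpace E] (hm : StronglyMeasurable w)
    (hw : ∀ t, ‖w t‖ ≤ C) {T : ℝ} (hT : 0 < T) {s S : ℝ} (hs : s ∈ Icc 0 S) :
    ∫ t in (0:ℝ)..T, ⟪w (t + s), ∫ s' in (0:ℝ)..S, w (t + s')⟫ ≤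
      T * (correlationIntegral w T s + correlationIntegral w T (S - s)) + 2 * S ^ 2 * C ^ 2 := by
  have hS : 0 ≤ S := hs.1.trans hs.2
  have hmF : StronglyMeasurable fun p : ℝ × ℝ => ⟪w (p.1 + s), w (p.1 + p.2)⟫ :=
    (hm.comp_measurable (measurable_fst.add_const s)).inner
      (hm.comp_measurable (measurable_fst.add measurable_snd))
  have hrow : IntervalIntegrable (fun s' => ∫ t in (0:ℝ)..T, ⟪w (t + s), w (t + s')⟫)
      volume 0 S := by
    have hm' : StronglyMeasurable fun p : ℝ × ℝ => ⟪w (p.2 + s), w (p.2 + p.1)⟫ :=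
      hmF.comp_measurable measurable_swap
    exact intervalIntegrable_of_norm_le (hm'.intervalIntegral_prod_right' 0 T).aestronglyMeasurable
      (fun s' => norm_integral_le_of_norm_le_const fun t _ => norm_inner_le_sq hw _ _) 0 S
  have hcorr : IntervalIntegrable (fun s' => correlation w T |s - s'|) volume 0 S :=
    intervalIntegrable_of_norm_le ((stronglyMeasurable_correlation hm T).comp_measurable
      (measurable_const.sub measurable_id).abs).aestronglyMeasurable
      (fun s' => norm_correlation_le hw T _) 0 S
  calc ∫ t in (0:ℝ)..T, ⟪w (t + s), ∫ s' in (0:ℝ)..S, w (t + s')⟫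
      = ∫ t in (0:ℝ)..T, ∫ s' in (0:ℝ)..S, ⟪w (t + s), w (t + s')⟫ := by
        refine integral_congr fun t _ => ?_
        exact ((innerSL ℝ (w (t + s))).intervalIntegral_comp_comm
          (intervalIntegrable_of_norm_le
            (hm.comp_measurable (measurable_const_add t)).aestronglyMeasurable
            (fun x => hw _) 0 S)).symm
    _ = ∫ s' in (0:ℝ)..S, ∫ t in (0:ℝ)..T, ⟪w (t + s), w (t + s')⟫ :=
        intervalIntegral_intervalIntegral_swap
          (integrableOn_uIoc_prod_of_norm_le hmF.aestronglyMeasurable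
            (fun p => norm_inner_le_sq hw _ _) _ _ _ _)
    _ ≤ ∫ s' in (0:ℝ)..S, (T * correlation w T |s - s'| + 2 * S * C ^ 2) :=
        integral_mono_on hS hrow ((hcorr.const_mul T).add intervalIntegrable_const) fun s' hs' =>
          integral_inner_comp_add_le hm hw hT hs hs'
    _ = T * (correlationIntegral w T s + correlationIntegral w T (S - s)) + 2 * S ^ 2 * C ^ 2 := by
        rw [integral_add (hcorr.const_mul T) intervalIntegrable_const,
          intervalIntegral.integral_const_mul,
          integral_comp_abs_sub (stronglyMeasurable_correlation hm T) (norm_correlation_le hw T) hs,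
          intervalIntegral.integral_const, smul_eq_mul, sub_zero, correlationIntegral,
          correlationIntegral]
        ring

lemma integral_norm_sq_window_le [CompleteSpace E] (hm : StronglyMeasurable w)
    (hw : ∀ t, ‖w t‖ ≤ C) {T S M : ℝ} (hT : 0 < T) (hS : 0 ≤ S)
    (hM : ∀ σ ∈ Icc 0 S, correlationIntegral w T σ ≤ M) :
    ∫ t in (0:ℝ)..T, ‖∫ s in (0:ℝ)..S, w (t + s)‖ ^ 2 ≤
      S * (2 * T * M + 2 * S ^ 2 * C ^ 2) := by
  set v : ℝ → E := fun t => ∫ s in (0:ℝ)..S, w (t + s)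
  have hwindow : ∀ t, IntervalIntegrable (fun s => w (t + s)) volume 0 S := fun t =>
    intervalIntegrable_of_norm_le (hm.comp_measurable (measurable_const_add t)).aestronglyMeasurable
      (fun s => hw _) 0 S
  have hv : StronglyMeasurable v :=
    (hm.comp_measurable (measurable_fst.add measurable_snd)).intervalIntegral_prod_right' 0 S
  have hvC : ∀ t, ‖v t‖ ≤ C * |S| := fun t =>
    (norm_integral_le_of_norm_le_const fun s _ => hw (t + s)).trans_eq (by rw [sub_zero])
  have hmF : StronglyMeasurable fun p : ℝ × ℝ => ⟪w (p.1 + p.2), v p.1⟫ :=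
    (hm.comp_measurable (measurable_fst.add measurable_snd)).inner
      (hv.comp_measurable measurable_fst)
  have hFC : ∀ p : ℝ × ℝ, ‖⟪w (p.1 + p.2), v p.1⟫‖ ≤ C * (C * |S|) := fun p =>
    (norm_inner_le_norm _ _).trans (mul_le_mul (hw _) (hvC _) (norm_nonneg _)
      ((norm_nonneg _).trans (hw 0)))
  have hnorm_sq : ∀ t, ‖v t‖ ^ 2 = ∫ s in (0:ℝ)..S, ⟪w (t + s), v t⟫ := fun t =>
    calc ‖v t‖ ^ 2 = ⟪v t, v t⟫ := (real_inner_self_eq_norm_sq _).symm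
      _ = ∫ s in (0:ℝ)..S, ⟪v t, w (t + s)⟫ :=
        ((innerSL ℝ (v t)).intervalIntegral_comp_comm (hwindow t)).symm
      _ = ∫ s in (0:ℝ)..S, ⟪w (t + s), v t⟫ := integral_congr fun s _ => real_inner_comm _ _
  have hrow : IntervalIntegrable (fun s => ∫ t in (0:ℝ)..T, ⟪w (t + s), v t⟫) volume 0 S := by
    have hm' : StronglyMeasurable fun p : ℝ × ℝ => ⟪w (p.2 + p.1), v p.2⟫ :=
      hmF.comp_measurable measurable_swap
    exact intervalIntegrable_of_norm_le (hm'.intervalIntegral_prod_right' 0 T).aestronglyMeasurable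
      (fun s => norm_integral_le_of_norm_le_const fun t _ => hFC (t, s)) 0 S
  calc ∫ t in (0:ℝ)..T, ‖v t‖ ^ 2 = ∫ t in (0:ℝ)..T, ∫ s in (0:ℝ)..S, ⟪w (t + s), v t⟫ :=
        integral_congr fun t _ => hnorm_sq t
    _ = ∫ s in (0:ℝ)..S, ∫ t in (0:ℝ)..T, ⟪w (t + s), v t⟫ :=
        intervalIntegral_intervalIntegral_swap
          (integrableOn_uIoc_prod_of_norm_le hmF.aestronglyMeasurable hFC _ _ _ _)
    _ ≤ ∫ _ in (0:ℝ)..S, (2 * T * M + 2 * S ^ 2 * C ^ 2) :=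
        integral_mono_on hS hrow intervalIntegrable_const fun s hs => by
          have := integral_inner_window_le hm hw hT hs
          have h₁ := hM s hs
          have h₂ := hM (S - s) ⟨sub_nonneg.2 hs.2, sub_le_self S hs.1⟩
          nlinarith
    _ = S * (2 * T * M + 2 * S ^ 2 * C ^ 2) := by
        rw [intervalIntegral.integral_const, sub_zero, smul_eq_mul]

lemma sq_norm_average_le_of_correlationIntegral_le [CompleteSpace E] (hm : StronglyMeasurable w)
    (hw : ∀ t, ‖w t‖ ≤ C) {T S M : ℝ} (hT : 0 < T) (hS : 0 < S)
    (hM : ∀ σ ∈ Icc 0 S, correlationIntegral w T σ ≤ M) :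
    ‖(1 / T) • ∫ t in (0:ℝ)..T, w t‖ ^ 2 ≤ 4 * M / S + 4 * S * C ^ 2 / T + 8 * (S * C / T) ^ 2 := by
  set A := ∫ t in (0:ℝ)..T, w t
  set B := ∫ t in (0:ℝ)..T, ∫ s in (0:ℝ)..S, w (t + s)
  have hv : StronglyMeasurable fun t => ∫ s in (0:ℝ)..S, w (t + s) :=
    (hm.comp_measurable (measurable_fst.add measurable_snd)).intervalIntegral_prod_right' 0 S
  have hvC : ∀ t, ‖∫ s in (0:ℝ)..S, w (t + s)‖ ≤ C * |S - 0| := fun t =>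
    norm_integral_le_of_norm_le_const fun s _ => hw (t + s)
  have hwindow := intervalIntegrable_of_norm_le hv.aestronglyMeasurable hvC 0 T
  have hwindow_sq := intervalIntegrable_of_norm_le
    (hv.norm.measurable.pow_const 2).aestronglyMeasurable
    (fun t => by rw [norm_pow, norm_norm]; exact pow_le_pow_left₀ (norm_nonneg _) (hvC t) 2) 0 T
  have hAB : S * ‖A‖ ≤ ‖B‖ + 2 * S ^ 2 * C := by
    have := norm_sub_norm_le (S • A) B
    rw [norm_smul, Real.norm_eq_abs, abs_of_pos hS] at this
    linarith [norm_smul_integral_sub_integral_window_le hm hw hS.le T]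
  have hB : ‖B‖ ^ 2 ≤ T * (S * (2 * T * M + 2 * S ^ 2 * C ^ 2)) := by
    have := sq_norm_intervalIntegral_le hT.le hwindow hwindow_sq
    rw [sub_zero] at this
    exact this.trans
      (mul_le_mul_of_nonneg_left (integral_norm_sq_window_le hm hw hT hS.le hM) hT.le)
  have hA : S ^ 2 * ‖A‖ ^ 2 ≤ 4 * T ^ 2 * S * M + 4 * T * S ^ 3 * C ^ 2 + 8 * S ^ 4 * C ^ 2 := by
    have h := pow_le_pow_left₀ (by positivity) hAB 2
    nlinarith [sq_nonneg (‖B‖ - 2 * S ^ 2 * C)]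
  have hrhs : 4 * M / S + 4 * S * C ^ 2 / T + 8 * (S * C / T) ^ 2 =
      (4 * T ^ 2 * S * M + 4 * T * S ^ 3 * C ^ 2 + 8 * S ^ 4 * C ^ 2) / (S ^ 2 * T ^ 2) := by
    field_simp
  rw [norm_smul, mul_pow, Real.norm_eq_abs, sq_abs, hrhs, le_div_iff₀ (by positivity)]
  calc (1 / T) ^ 2 * ‖A‖ ^ 2 * (S ^ 2 * T ^ 2) = S ^ 2 * ‖A‖ ^ 2 := by field_simp
    _ ≤ _ := hA

lemma exists_eventually_forall_correlationIntegral_le (hm : StronglyMeasurable w)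
    (hw : ∀ t, ‖w t‖ ≤ C) {ε : ℝ} (hε : 0 < ε)
    (h : ∀ᶠ S in atTop, ∀ᶠ T in atTop, |(1 / S) * correlationIntegral w T S| < ε) :
    ∃ S₀ > 0, ∀ S ≥ S₀, ∀ᶠ T in atTop, ∀ σ ∈ Icc 0 S,
      correlationIntegral w T σ ≤ C ^ 2 * S₀ + 2 * ε * S := by
  obtain ⟨S₁, hS₁⟩ := eventually_atTop.1 h
  set S₀ := max S₁ 1
  have hS₀ : 0 < S₀ := zero_lt_one.trans_le (le_max_right _ _)
  refine ⟨S₀, hS₀, fun S hS => ?_⟩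
  have hpoint : ∀ σ ∈ Icc S₀ S, ∀ᶠ T in atTop, correlationIntegral w T σ < ε * S := by
    intro σ hσ
    have hσ₀ : 0 < σ := hS₀.trans_le hσ.1
    filter_upwards [hS₁ σ ((le_max_left _ _).trans hσ.1)] with T hT
    rw [abs_mul, abs_of_pos (one_div_pos.2 hσ₀), one_div, inv_mul_lt_iff₀ hσ₀] at hT
    nlinarith [le_abs_self (correlationIntegral w T σ), hσ.2]
  have hequi : Equicontinuous fun T => correlationIntegral w T :=
    (LipschitzWith.uniformEquicontinuous _ _
      (lipschitzWith_correlationIntegral hm hw)).equicontinuous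
  have hεS : 0 < ε * S := mul_pos hε (hS₀.trans_le hS)
  filter_upwards [isCompact_Icc.eventually_forall_lt_add hequi hεS hpoint] with T hT σ hσ
  rcases le_total σ S₀ with hσS₀ | hS₀σ
  · have h : ‖correlationIntegral w T σ‖ ≤ C ^ 2 * |σ - 0| :=
      norm_integral_le_of_norm_le_const fun s _ => norm_correlation_le hw T s
    rw [sub_zero, abs_of_nonneg hσ.1, Real.norm_eq_abs] at h
    have : C ^ 2 * σ ≤ C ^ 2 * S₀ := by gcongr
    linarith [le_abs_self (correlationIntegral w T σ)]
  · have : 0 ≤ C ^ 2 * S₀ := by positivity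
    linarith [hT σ ⟨hS₀σ, hσ.2⟩]

theorem tendsto_average_of_eventually_correlationIntegral_lt [CompleteSpace E]
    (hm : StronglyMeasurable w) (hw : ∀ t, ‖w t‖ ≤ C)
    (h : ∀ ε > 0, ∀ᶠ S in atTop, ∀ᶠ T in atTop, |(1 / S) * correlationIntegral w T S| < ε) :
    Tendsto (fun T : ℝ => (1 / T) • ∫ t in (0:ℝ)..T, w t) atTop (𝓝 0) := by
  suffices hsq : Tendsto (fun T : ℝ => ‖(1 / T) • ∫ t in (0:ℝ)..T, w t‖ ^ 2) atTop (𝓝 0) by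
    rw [tendsto_zero_iff_norm_tendsto_zero]
    simpa [Real.sqrt_sq (norm_nonneg _)] using hsq.sqrt
  refine tendsto_order.2 ⟨fun a ha => .of_forall fun T => ha.trans_le (sq_nonneg _), ?_⟩
  intro η hη
  obtain ⟨S₀, hS₀, hG⟩ := exists_eventually_forall_correlationIntegral_le hm hw
    (by positivity) (h (η / 32) (by positivity))
  set S := max S₀ (16 * C ^ 2 * S₀ / η)
  have hS : 0 < S := hS₀.trans_le (le_max_left _ _)
  have hS₀S : 4 * C ^ 2 * S₀ / S ≤ η / 4 := by
    have := le_max_right S₀ (16 * C ^ 2 * S₀ / η)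
    rw [div_le_iff₀ hη] at this
    rw [div_le_iff₀ hS]
    linarith
  have herr : ∀ᶠ T in atTop, 4 * S * C ^ 2 / T + 8 * (S * C / T) ^ 2 < η / 4 := by
    have : Tendsto (fun T : ℝ => 4 * S * C ^ 2 / T + 8 * (S * C / T) ^ 2) atTop (𝓝 0) := by
      have h₁ : Tendsto (fun T : ℝ => 4 * S * C ^ 2 / T) atTop (𝓝 0) :=
        tendsto_const_nhds.div_atTop tendsto_id
      have h₂ : Tendsto (fun T : ℝ => S * C / T) atTop (𝓝 0) :=
        tendsto_const_nhds.div_atTop tendsto_id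
      simpa using h₁.add ((h₂.pow 2).const_mul 8)
    exact this.eventually_lt_const (by positivity)
  filter_upwards [hG S (le_max_left _ _), herr, eventually_gt_atTop 0] with T hGT hT hTpos
  calc ‖(1 / T) • ∫ t in (0:ℝ)..T, w t‖ ^ 2
      ≤ 4 * (C ^ 2 * S₀ + 2 * (η / 32) * S) / S + 4 * S * C ^ 2 / T + 8 * (S * C / T) ^ 2 :=
        sq_norm_average_le_of_correlationIntegral_le hm hw hTpos hS hGT
    _ = 4 * C ^ 2 * S₀ / S + η / 4 + (4 * S * C ^ 2 / T + 8 * (S * C / T) ^ 2) := by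
        field_simp; ring
    _ < η := by linarith

end Correlation

/-- **Continuous-time van der Corput estimate.**
If `u : [0,∞) → ℌ` is a bounded strongly measurable map into a real Hilbert space and the
iterated limit (as `T → ∞` and then `S → ∞`) of the absolute values of the double averages
`(1/S)∫₀^S (1/T)∫₀^T ⟪u(t+s), u(t)⟫ dt ds` is zero, then the vector-valued averages
`(1/T)∫₀^T u(t) dt` converge to `0` in norm. -/
theorem continuous_time_van_der_corput
    {ℌ : Type*} [NormedAddCommGroup ℌ] [InnerProductSpace ℝ ℌ] [CompleteSpace ℌ]
    (u : ℝ → ℌ) (hmeas : StronglyMeasurable u)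
    (hbdd : ∃ C : ℝ, ∀ t : ℝ, 0 ≤ t → ‖u t‖ ≤ C)
    (hscalar :
      limsup (fun S : ℝ =>
        limsup (fun T : ℝ =>
            |(1 / S) * ∫ s in (0:ℝ)..S, ((1 / T) * ∫ t in (0:ℝ)..T,
                (inner ℝ (u (t + s)) (u t) : ℝ))|) atTop) atTop = 0) :
    Tendsto (fun T : ℝ => (1 / T) • ∫ t in (0:ℝ)..T, u t) atTop (nhds (0 : ℌ)) := by
  obtain ⟨C, hC⟩ := hbdd
  set w := (Ici (0:ℝ)).indicator u
  have hw : ∀ t, ‖w t‖ ≤ max C 0 := norm_indicator_Ici_le hC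
  have hscalar_w : limsup (fun S : ℝ => limsup (fun T : ℝ =>
      |(1 / S) * correlationIntegral w T S|) atTop) atTop = 0 := by
    rw [← hscalar]
    refine limsup_congr (eventually_ge_atTop 0 |>.mono fun S hS => limsup_congr ?_)
    filter_upwards [eventually_ge_atTop 0] with T hT
    rw [correlationIntegral_indicator_Ici hS hT]
    rfl
  refine (tendsto_average_of_eventually_correlationIntegral_lt (hmeas.indicator measurableSet_Ici)
    hw fun ε hε => eventually_eventually_lt_of_limsup_limsup_eq_zero
      (fun S T => norm_one_div_mul_integral_le (norm_correlation_le hw T) S) hscalar_w hε).congr' ?_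
  filter_upwards [eventually_ge_atTop 0] with T hT
  rw [intervalIntegral_indicator_Ici hT]
end
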